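/- arXiv:2303.16303 — 6 statements merged into one kernel-verified Lean document; each statement's English description precedes it below -/
import Mathlib

section
/- If a graph G has a biclique cover of size M (i.e., a collection of bicliques A_1×B_1,…,A_s×B_s with E(G) = ⋃_i A_i×B_i and M = Σ_i (|A_i|+|B_i|)), then G admits a 3-hop spanner with O(M) edges. -/
/-!
Each biclique `A × B` with `A` and `B` nonempty is 3-hop spanned by the double star made of the
star from a fixed `a₀ ∈ A` onto `B` and the star from a fixed `b₀ ∈ B` onto `A`: every edge `ab`
is joined by the walk `a, b₀, a₀, b`. The double star has at most `|A| + |B|` edges, and the union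
of the double stars of a biclique cover is a 3-hop spanner of `G` with at most `M` edges.
-/

/-- `H` is a `t`-hop spanner of `G`: a subgraph such that every edge of `G`
is connected in `H` by a path (walk) of at most `t` edges. -/
def IsHopSpanner {V : Type*} (G H : SimpleGraph V) (t : ℕ) : Prop :=
  H ≤ G ∧ ∀ u v : V, G.Adj u v → ∃ p : H.Walk u v, p.length ≤ t

namespace SimpleGraph

variable {V : Type*}

def bicliqueDoubleStar (A B : Finset V) (a₀ b₀ : V) : SimpleGraph V :=
  fromRel fun a b => a ∈ A ∧ b ∈ B ∧ (a = a₀ ∨ b = b₀)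

variable {A B : Finset V} {a₀ b₀ : V}

theorem bicliqueDoubleStar_le {G : SimpleGraph V} (hAB : ∀ a ∈ A, ∀ b ∈ B, G.Adj a b) :
    bicliqueDoubleStar A B a₀ b₀ ≤ G := by
  rintro u v ⟨-, ⟨hu, hv, -⟩ | ⟨hv, hu, -⟩⟩
  · exact hAB u hu v hv
  · exact (hAB v hv u hu).symm

theorem bicliqueDoubleStar_adj (hAB : Disjoint A B) {a b : V} (ha : a ∈ A) (hb : b ∈ B)
    (hab : a = a₀ ∨ b = b₀) : (bicliqueDoubleStar A B a₀ b₀).Adj a b :=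
  ⟨fun h => Finset.disjoint_left.mp hAB ha (h ▸ hb), Or.inl ⟨ha, hb, hab⟩⟩

theorem exists_walk_bicliqueDoubleStar (hAB : Disjoint A B) (ha₀ : a₀ ∈ A) (hb₀ : b₀ ∈ B)
    {a b : V} (ha : a ∈ A) (hb : b ∈ B) :
    ∃ p : (bicliqueDoubleStar A B a₀ b₀).Walk a b, p.length ≤ 3 :=
  ⟨.cons (bicliqueDoubleStar_adj hAB ha hb₀ (.inr rfl))
    (.cons (bicliqueDoubleStar_adj hAB ha₀ hb₀ (.inl rfl)).symm
    (.cons (bicliqueDoubleStar_adj hAB ha₀ hb (.inl rfl)) .nil)), le_rfl⟩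

theorem ncard_edgeSet_bicliqueDoubleStar_le :
    (bicliqueDoubleStar A B a₀ b₀).edgeSet.ncard ≤ A.card + B.card := by
  classical
  have hsub : (bicliqueDoubleStar A B a₀ b₀).edgeSet ⊆
      ↑(A.image (s(·, b₀)) ∪ B.image (s(a₀, ·))) := by
    intro e he
    induction e using Sym2.ind with
    | _ u v =>
      obtain ⟨-, ⟨hu, hv, rfl | rfl⟩ | ⟨hv, hu, rfl | rfl⟩⟩ := he
      · exact Finset.mem_union_right _ (Finset.mem_image_of_mem _ hv)
      · exact Finset.mem_union_left _ (Finset.mem_image_of_mem _ hu)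
      · exact Finset.mem_union_right _ (Finset.mem_image.2 ⟨u, hu, Sym2.eq_swap⟩)
      · exact Finset.mem_union_left _ (Finset.mem_image.2 ⟨v, hv, Sym2.eq_swap⟩)
  calc (bicliqueDoubleStar A B a₀ b₀).edgeSet.ncard
      ≤ (A.image (s(·, b₀)) ∪ B.image (s(a₀, ·))).card :=
        (Set.ncard_le_ncard hsub (Finset.finite_toSet _)).trans_eq (Set.ncard_coe_finset _)
    _ ≤ (A.image (s(·, b₀))).card + (B.image (s(a₀, ·))).card := Finset.card_union_le _ _
    _ ≤ A.card + B.card := add_le_add Finset.card_image_le Finset.card_image_le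

theorem exists_three_hop_biclique_subgraph {G : SimpleGraph V} (hAB : Disjoint A B)
    (hadj : ∀ a ∈ A, ∀ b ∈ B, G.Adj a b) :
    ∃ S : SimpleGraph V, S ≤ G ∧ S.edgeSet.ncard ≤ A.card + B.card ∧
      ∀ a ∈ A, ∀ b ∈ B, ∃ p : S.Walk a b, p.length ≤ 3 := by
  by_cases hne : A.Nonempty ∧ B.Nonempty
  · obtain ⟨⟨a₀, ha₀⟩, ⟨b₀, hb₀⟩⟩ := hne
    exact ⟨bicliqueDoubleStar A B a₀ b₀, bicliqueDoubleStar_le hadj,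
      ncard_edgeSet_bicliqueDoubleStar_le,
      fun a ha b hb => exists_walk_bicliqueDoubleStar hAB ha₀ hb₀ ha hb⟩
  · exact ⟨⊥, bot_le, by simp, fun a ha b hb => absurd ⟨⟨a, ha⟩, ⟨b, hb⟩⟩ hne⟩

theorem ncard_edgeSet_iSup_le {ι : Type*} [Fintype ι] (S : ι → SimpleGraph V) :
    (⨆ i, S i).edgeSet.ncard ≤ ∑ i, (S i).edgeSet.ncard := by
  rw [edgeSet_iSup]
  exact Set.ncard_iUnion_le_of_fintype _

end SimpleGraph

/-- If a graph `G` has a biclique cover of size `M = ∑ (|Aᵢ| + |Bᵢ|)`, then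
`G` admits a 3-hop spanner with `O(M)` edges. -/
theorem biclique_cover_three_hop_spanner :
    ∃ c : ℕ, ∀ (V : Type) [Fintype V] [DecidableEq V] (G : SimpleGraph V)
      (s : ℕ) (A B : Fin s → Finset V),
      (∀ i, Disjoint (A i) (B i)) →
      (∀ i, ∀ a ∈ A i, ∀ b ∈ B i, G.Adj a b) →
      (∀ u v : V, G.Adj u v → ∃ i, (u ∈ A i ∧ v ∈ B i) ∨ (v ∈ A i ∧ u ∈ B i)) →
      ∃ H : SimpleGraph V, IsHopSpanner G H 3 ∧
        H.edgeSet.ncard ≤ c * ∑ i, ((A i).card + (B i).card) := by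
  refine ⟨1, fun V _ _ G s A B hdisj hadj hcover => ?_⟩
  choose S hSG hScard hSwalk using fun i =>
    SimpleGraph.exists_three_hop_biclique_subgraph (hdisj i) (hadj i)
  refine ⟨⨆ i, S i, ⟨iSup_le hSG, fun u v huv => ?_⟩, ?_⟩
  · obtain ⟨i, ⟨hu, hv⟩ | ⟨hv, hu⟩⟩ := hcover u v huv
    · obtain ⟨p, hp⟩ := hSwalk i u hu v hv
      exact ⟨p.mapLe (le_iSup S i), by simpa using hp⟩
    · obtain ⟨p, hp⟩ := hSwalk i v hv u hu
      exact ⟨(p.mapLe (le_iSup S i)).reverse, by simpa using hp⟩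
  · rw [one_mul]
    exact (SimpleGraph.ncard_edgeSet_iSup_le S).trans (Finset.sum_le_sum fun i _ => hScard i)
end

section
/- Define B(n) by B(n) ≤ max over n_1,n_2 ≤ 2n/3 with n_1+n_2 ≤ n of [B(n_1 + C√(Δn)) + B(n_2 + C√(Δn)) + C√(Δn)] for n ≥ r, and B(n) = 0 for n < r, where Δ = o(r). Then B(n) = O(√Δ · n/√r). -/
/-!
Rescaling by `r` (`s = n / r`), it suffices to find a nonnegative potential `f` with
`f y₁ + f y₂ + √s ≤ f s` whenever `y₁, y₂` are the rescaled children of `s`, and `f s = O(s)`.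
For `s ≤ 36` the quadratic `20 s²` works, because both children are at most `7/9` of `s`.
Beyond that we use `9000 s - 8000 √s`: the overlap `y₁ + y₂ - s ≤ 0.22 √s` of the children is paid
for by the concavity of `√`. Either the split loses a fixed fraction of `s`, or both children
are a fixed fraction of `s` and then `√y₁ + √y₂ ≥ (5/4) √s`.
-/

theorem sqrt_le_div_of_sq_le {a s : ℝ} (ha : 0 < a) (h : a ^ 2 ≤ s) : √s ≤ s / a := by
  have has : a ≤ √s := Real.le_sqrt_of_sq_le h
  rw [le_div_iff₀ ha]
  nlinarith [Real.mul_self_sqrt (show 0 ≤ s by nlinarith)]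

theorem le_sqrt_mul_sqrt_of_le {y s : ℝ} (hy : 0 ≤ y) (hys : y ≤ s) : y ≤ √s * √y := by
  have := mul_le_mul_of_nonneg_right (Real.sqrt_le_sqrt hys) (Real.sqrt_nonneg y)
  rwa [Real.mul_self_sqrt hy] at this

/-- `y₁, y₂` are the child sizes `(nᵢ + ⌈C √(Δ n)⌉) / r` of `s = n / r`, using
`⌈C √(Δ n)⌉ ≤ 0.11 √(r n)`. -/
structure AdmissibleSplit (s y₁ y₂ : ℝ) : Prop where
  nonneg_left : 0 ≤ y₁
  nonneg_right : 0 ≤ y₂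
  left_le : y₁ ≤ 2 / 3 * s + 11 / 100 * √s
  right_le : y₂ ≤ 2 / 3 * s + 11 / 100 * √s
  add_le : y₁ + y₂ ≤ s + 22 / 100 * √s

namespace AdmissibleSplit

variable {s y₁ y₂ : ℝ}

theorem symm (h : AdmissibleSplit s y₁ y₂) : AdmissibleSplit s y₂ y₁ :=
  ⟨h.nonneg_right, h.nonneg_left, h.right_le, h.left_le, by linarith [h.add_le]⟩

theorem mono (h : AdmissibleSplit s y₁ y₂) {z₁ z₂ : ℝ} (hz₁ : 0 ≤ z₁) (hz₂ : 0 ≤ z₂)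
    (hzy₁ : z₁ ≤ y₁) (hzy₂ : z₂ ≤ y₂) : AdmissibleSplit s z₁ z₂ :=
  ⟨hz₁, hz₂, hzy₁.trans h.left_le, hzy₂.trans h.right_le, by linarith [h.add_le]⟩

theorem left_le_of_one_le (h : AdmissibleSplit s y₁ y₂) (hs : 1 ≤ s) : y₁ ≤ 7 / 9 * s := by
  linarith [h.left_le, Real.sqrt_le_self_iff.mpr (Or.inr hs)]

theorem left_le_of_36_le (h : AdmissibleSplit s y₁ y₂) (hs : 36 ≤ s) : y₁ ≤ 137 / 200 * s := by
  linarith [h.left_le, sqrt_le_div_of_sq_le (by norm_num : (0:ℝ) < 6) (by linarith)]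

theorem mul_sqrt_le_sqrt_add_sqrt (h : AdmissibleSplit s y₁ y₂) (hs : 36 ≤ s)
    (hσ : 49 / 50 * s ≤ y₁ + y₂) : 5 / 4 * √s ≤ √y₁ + √y₂ := by
  have hy₁ : 59 / 200 * s ≤ y₁ := by linarith [h.symm.left_le_of_36_le hs]
  have hy₂ : 59 / 200 * s ≤ y₂ := by linarith [h.left_le_of_36_le hs]
  have hprod : 59 / 200 * s ≤ √y₁ * √y₂ := by
    rw [← Real.sqrt_mul h.nonneg_left]
    exact Real.le_sqrt_of_sq_le (by nlinarith)
  rw [← pow_le_pow_iff_left₀ (by positivity) (by positivity) two_ne_zero, mul_pow,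
    Real.sq_sqrt (by linarith)]
  nlinarith [Real.sq_sqrt h.nonneg_left, Real.sq_sqrt h.nonneg_right]

end AdmissibleSplit

noncomputable def linearPotential (s : ℝ) : ℝ := 9000 * s - 8000 * √s

theorem linearPotential_add_le {s y₁ y₂ : ℝ} (hs : 36 ≤ s) (h : AdmissibleSplit s y₁ y₂) :
    linearPotential y₁ + linearPotential y₂ + √s ≤ linearPotential s := by
  unfold linearPotential
  have h6 : 6 ≤ √s := Real.le_sqrt_of_sq_le (by linarith)
  rcases le_total (y₁ + y₂) (49 / 50 * s) with hσ | hσ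
  · have hy₁ := le_sqrt_mul_sqrt_of_le (s := s) h.nonneg_left
      (by linarith [h.left_le_of_36_le hs])
    have hy₂ := le_sqrt_mul_sqrt_of_le (s := s) h.nonneg_right
      (by linarith [h.symm.left_le_of_36_le hs])
    have hs' := Real.mul_self_sqrt (show 0 ≤ s by linarith)
    -- multiplied by `√s`, this is `s ≤ (9000 √s - 8000) (s - y₁ - y₂)`
    nlinarith [mul_le_mul_of_nonneg_left hσ (show 0 ≤ 9000 * √s - 8000 by linarith)]
  · linarith [h.mul_sqrt_le_sqrt_add_sqrt hs hσ, h.add_le]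

theorem exists_linearPotential_eq_max {y : ℝ} (hy : 0 ≤ y) :
    ∃ z, 0 ≤ z ∧ z ≤ y ∧ max (linearPotential y) 0 = linearPotential z := by
  rcases le_total (linearPotential y) 0 with hψ | hψ
  · exact ⟨0, le_rfl, hy, by rw [max_eq_right hψ]; simp [linearPotential]⟩
  · exact ⟨y, hy, le_rfl, max_eq_left hψ⟩

theorem max_linearPotential_add_le {s y₁ y₂ : ℝ} (hs : 36 ≤ s) (h : AdmissibleSplit s y₁ y₂) :
    max (linearPotential y₁) 0 + max (linearPotential y₂) 0 + √s ≤ linearPotential s := by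
  obtain ⟨z₁, hz₁, hzy₁, hψ₁⟩ := exists_linearPotential_eq_max h.nonneg_left
  obtain ⟨z₂, hz₂, hzy₂, hψ₂⟩ := exists_linearPotential_eq_max h.nonneg_right
  rw [hψ₁, hψ₂]
  exact linearPotential_add_le hs (h.mono hz₁ hz₂ hzy₁ hzy₂)

theorem quadratic_add_le {s y₁ y₂ : ℝ} (hs : 1 ≤ s) (h : AdmissibleSplit s y₁ y₂) :
    20 * y₁ ^ 2 + 20 * y₂ ^ 2 + √s ≤ 20 * s ^ 2 := by
  have hsqrt : √s ≤ s := Real.sqrt_le_self_iff.mpr (Or.inr hs)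
  have hσ : y₁ + y₂ ≤ 61 / 50 * s := by linarith [h.add_le]
  nlinarith [mul_le_mul_of_nonneg_right (h.left_le_of_one_le hs) h.nonneg_left,
    mul_le_mul_of_nonneg_right (h.symm.left_le_of_one_le hs) h.nonneg_right,
    mul_le_mul_of_nonneg_left hσ (show 0 ≤ s by linarith),
    mul_le_mul_of_nonneg_left hs (show 0 ≤ s by linarith)]

theorem quadratic_le_linearPotential {s : ℝ} (hs : 1 ≤ s) (hs' : s ≤ 36) :
    20 * s ^ 2 ≤ linearPotential s := by
  unfold linearPotential
  nlinarith [Real.sqrt_le_self_iff.mpr (Or.inr hs)]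

/-- Truncating at `0` covers the children below the base size `r`, where `B` vanishes. -/
noncomputable def potential (s : ℝ) : ℝ := min (20 * s ^ 2) (max (linearPotential s) 0)

theorem potential_nonneg (s : ℝ) : 0 ≤ potential s :=
  le_min (by positivity) (le_max_right _ _)

theorem potential_le_quadratic (s : ℝ) : potential s ≤ 20 * s ^ 2 :=
  min_le_left _ _

theorem potential_le_max (s : ℝ) : potential s ≤ max (linearPotential s) 0 :=
  min_le_right _ _

theorem potential_le {s : ℝ} (hs : 0 ≤ s) : potential s ≤ 9000 * s :=
  (potential_le_max s).trans <|
    max_le (by unfold linearPotential; linarith [Real.sqrt_nonneg s]) (by positivity)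

theorem potential_add_le {s y₁ y₂ : ℝ} (hs : 1 ≤ s) (h : AdmissibleSplit s y₁ y₂) :
    potential y₁ + potential y₂ + √s ≤ potential s := by
  have hquad : potential y₁ + potential y₂ + √s ≤ 20 * s ^ 2 := by
    linarith [potential_le_quadratic y₁, potential_le_quadratic y₂, quadratic_add_le hs h]
  refine le_min hquad (le_max_of_le_left ?_)
  rcases le_total s 36 with hs' | hs'
  · exact hquad.trans (quadratic_le_linearPotential hs hs')
  · linarith [potential_le_max y₁, potential_le_max y₂, max_linearPotential_add_le hs' h]

theorem le_mul_of_recurrence (f : ℝ → ℝ) (hf₀ : ∀ s, 0 ≤ f s)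
    (hf : ∀ s y₁ y₂, 1 ≤ s → AdmissibleSplit s y₁ y₂ → f y₁ + f y₂ + √s ≤ f s)
    {r : ℕ} (hr : 0 < r) {κ : ℝ} (hκ : 0 ≤ κ) {B : ℕ → ℝ} (hB₀ : ∀ n < r, B n = 0)
    (hB : ∀ n, r ≤ n → ∃ m₁ m₂ : ℕ, AdmissibleSplit (n / r) (m₁ / r) (m₂ / r) ∧
      B n ≤ B m₁ + B m₂ + κ * r * √(n / r))
    (n : ℕ) : B n ≤ κ * r * f (n / r) := by
  induction n using Nat.strong_induction_on with
  | _ n ih =>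
    rcases lt_or_ge n r with hn | hn
    · rw [hB₀ n hn]
      exact mul_nonneg (by positivity) (hf₀ _)
    obtain ⟨m₁, m₂, hsplit, hBn⟩ := hB n hn
    have hr' : (0 : ℝ) < r := by exact_mod_cast hr
    have hs : 1 ≤ (n : ℝ) / r := by rw [one_le_div hr']; exact_mod_cast hn
    have hlt : ∀ m : ℕ, (m : ℝ) / r ≤ 7 / 9 * (n / r) → m < n := fun m hm => by
      have : (m : ℝ) / r < n / r := by linarith
      exact_mod_cast (div_lt_div_iff_of_pos_right hr').mp this
    have ih₁ := ih m₁ (hlt m₁ (hsplit.left_le_of_one_le hs))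
    have ih₂ := ih m₂ (hlt m₂ (hsplit.symm.left_le_of_one_le hs))
    calc B n ≤ κ * r * f (m₁ / r) + κ * r * f (m₂ / r) + κ * r * √(n / r) := by linarith
      _ = κ * r * (f (m₁ / r) + f (m₂ / r) + √(n / r)) := by ring
      _ ≤ κ * r * f (n / r) := by gcongr; exact hf _ _ _ hs hsplit

theorem natCeil_mul_sqrt_le {C Δ r x : ℝ} (hC : 0 ≤ C) (hΔ : 0 ≤ Δ)
    (hr : 100 * (C + 1) ^ 2 * (Δ + 1) ≤ r) (hrx : r ≤ x) :
    (⌈C * √(Δ * x)⌉₊ : ℝ) ≤ 11 / 100 * √(r * x) := by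
  have hr₁₀₀ : 100 ≤ r := by nlinarith [mul_nonneg (mul_nonneg hC hC) hΔ, mul_nonneg hC hΔ]
  have hx : 0 ≤ x := by linarith
  have hmain : C * √(Δ * x) * 10 ≤ √(r * x) := by
    rw [Real.le_sqrt (by positivity) (by positivity), mul_pow, mul_pow,
      Real.sq_sqrt (by positivity)]
    nlinarith [mul_nonneg (mul_nonneg hC hC) hΔ, mul_nonneg hC hΔ]
  have h₁₀₀ : 100 ≤ √(r * x) := Real.le_sqrt_of_sq_le (by nlinarith)
  have hceil := Nat.ceil_lt_add_one (show 0 ≤ C * √(Δ * x) by positivity)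
  linarith

theorem admissibleSplit_div {r x x₁ x₂ t : ℝ} (hr : 0 < r) (hx₁ : 0 ≤ x₁) (hx₂ : 0 ≤ x₂)
    (h₁ : 3 * x₁ ≤ 2 * x) (h₂ : 3 * x₂ ≤ 2 * x) (h₁₂ : x₁ + x₂ ≤ x) (ht₀ : 0 ≤ t)
    (ht : t ≤ 11 / 100 * √(r * x)) :
    AdmissibleSplit (x / r) ((x₁ + t) / r) ((x₂ + t) / r) := by
  have hsqrt : √(r * x) = r * √(x / r) := by
    rw [show r * x = r ^ 2 * (x / r) by field_simp, Real.sqrt_mul (sq_nonneg r),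
      Real.sqrt_sq hr.le]
  rw [hsqrt] at ht
  refine ⟨by positivity, by positivity, ?_, ?_, ?_⟩ <;>
    · field_simp
      linarith

/-- The recurrence `B(n) ≤ max_{n₁,n₂ ≤ 2n/3, n₁+n₂ ≤ n}
[B(n₁ + ⌈C√(Δn)⌉) + B(n₂ + ⌈C√(Δn)⌉) + C√(Δn)]` for `n ≥ r`, with `B(n) = 0` for
`n < r` and `Δ = o(r)` (encoded as an explicit smallness condition on `Δ` versus `r`),
solves to `B(n) = O(√Δ · n / √r)`, with the constant depending only on `C`. -/
theorem recurrence_boundary_complexity :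
    ∀ C : ℝ, 0 < C → ∃ c : ℝ, 0 < c ∧ ∀ Δ r : ℕ,
      (100 * (C + 1) ^ 2 * (Δ + 1) ≤ (r : ℝ)) →
      ∀ B : ℕ → ℝ,
        (∀ n < r, B n = 0) →
        (∀ n, r ≤ n → ∃ n₁ n₂ : ℕ, 3 * n₁ ≤ 2 * n ∧ 3 * n₂ ≤ 2 * n ∧ n₁ + n₂ ≤ n ∧
          B n ≤ B (n₁ + ⌈C * Real.sqrt (Δ * n)⌉₊) + B (n₂ + ⌈C * Real.sqrt (Δ * n)⌉₊) +
            C * Real.sqrt (Δ * n)) →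
        ∀ n : ℕ, B n ≤ c * Real.sqrt Δ * n / Real.sqrt r := by
  intro C hC
  refine ⟨9000 * C, by positivity, fun Δ r hr B hB₀ hB n => ?_⟩
  have hr₀ : (0 : ℝ) < r := lt_of_lt_of_le (by positivity) hr
  have hcost : ∀ x : ℝ, C * √(Δ * x) = C * √Δ / √r * r * √(x / r) := fun x => by
    rw [Real.sqrt_mul (Nat.cast_nonneg _), Real.sqrt_div' _ hr₀.le]
    field_simp
    rw [Real.sq_sqrt hr₀.le]
  have key := le_mul_of_recurrence potential potential_nonneg (fun _ _ _ => potential_add_le)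
    (Nat.cast_pos.mp hr₀) (κ := C * √Δ / √r) (by positivity) hB₀ (fun m hm => ?_) n
  · calc B n ≤ C * √Δ / √r * r * potential (n / r) := key
      _ ≤ C * √Δ / √r * r * (9000 * (n / r)) := by gcongr; exact potential_le (by positivity)
      _ = 9000 * C * √Δ * n / √r := by field_simp
  · obtain ⟨n₁, n₂, h₁, h₂, h₁₂, hBm⟩ := hB m hm
    refine ⟨n₁ + ⌈C * √(Δ * m)⌉₊, n₂ + ⌈C * √(Δ * m)⌉₊, ?_, by rwa [← hcost]⟩
    push_cast
    exact admissibleSplit_div hr₀ (by positivity) (by positivity) (by exact_mod_cast h₁)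
      (by exact_mod_cast h₂) (by exact_mod_cast h₁₂) (by positivity)
      (natCeil_mul_sqrt_le hC.le (by positivity) hr (by exact_mod_cast hm))
end

section
/- Fix an odd number d* > d and shifts τ^(j) = (j/d*, …, j/d*) ∈ R^d for j = 0, …, d*−1. For any object u ⊆ [0,1)^d with side length ℓ (side length of its smallest enclosing hypercube), the shifted object u + τ^(j) fails to be contained in a quadtree cell of side length at most 2d*·ℓ for at most d indices j ∈ {0,…,d*−1}. -/
/-!
Let `ℓ` be the side length of `u` and pick the dyadic side `s = 2^(-k)` with `d*·ℓ < s ≤ 2d*·ℓ`.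
If `s ≥ 2`, the cell `[0, s)^d` contains every shift of `u ⊆ [0,1)^d`. Otherwise `s = 1/N` with
`N = 2^k`, and `u` lies in a cube `∏ [a_i, a_i + ℓ']` with `ℓ' < s/d*`. The shift `j` can only fail
if, in some coordinate `i`, a grid point `m·s` lies in `(a_i + j/d*, a_i + j/d* + ℓ']`. Scaling by
`N·d*` makes `m·d* - j·N` an integer in a half-open interval of length `< 1`, hence determined by
`i`; since `N` is invertible modulo the odd `d*`, so is `j`. Thus each coordinate spoils at most one
shift.
-/

/-- An axis-aligned hypercube in `ℝ^d` with lower corner `a` and side length `ℓ`. -/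
def hcube (d : ℕ) (a : Fin d → ℝ) (ℓ : ℝ) : Set (Fin d → ℝ) :=
  {x | ∀ i, a i ≤ x i ∧ x i ≤ a i + ℓ}

/-- The side length of an object: the side length of its smallest enclosing
axis-aligned hypercube. -/
noncomputable def sideLength (d : ℕ) (u : Set (Fin d → ℝ)) : ℝ :=
  sInf {ℓ : ℝ | 0 ≤ ℓ ∧ ∃ a : Fin d → ℝ, u ⊆ hcube d a ℓ}

/-- The quadtree cell `[c₁·2^{-k}, (c₁+1)·2^{-k}) × ⋯ × [c_d·2^{-k}, (c_d+1)·2^{-k})`. -/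
def qtCell (d : ℕ) (k : ℤ) (c : Fin d → ℤ) : Set (Fin d → ℝ) :=
  {x | ∀ i, (c i : ℝ) * (2 : ℝ) ^ (-k) ≤ x i ∧ x i < ((c i : ℝ) + 1) * (2 : ℝ) ^ (-k)}

/-- `γ` is a quadtree cell. -/
def IsQuadtreeCell (d : ℕ) (γ : Set (Fin d → ℝ)) : Prop :=
  ∃ (k : ℤ) (c : Fin d → ℤ), γ = qtCell d k c

/-- An object `u` is `C`-aligned if it is contained in a quadtree cell of side length
at most `C` times the side length of `u`. -/
def IsAligned (d : ℕ) (C : ℝ) (u : Set (Fin d → ℝ)) : Prop :=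
  ∃ (k : ℤ) (c : Fin d → ℤ),
    (2 : ℝ) ^ (-k) ≤ C * sideLength d u ∧ u ⊆ qtCell d k c

/-- A collection `F` of objects in `ℝ^d` is `c`-fat if for every hypercube `γ` of side
length `ℓ` there exist at most `c` points hitting all members of `F` that intersect `γ`
and have side length at least `ℓ`. -/
def CFat (d c : ℕ) (F : Set (Set (Fin d → ℝ))) : Prop :=
  ∀ (a : Fin d → ℝ) (ℓ : ℝ), 0 < ℓ →
    ∃ P : Finset (Fin d → ℝ), P.card ≤ c ∧
      ∀ u ∈ F, (u ∩ hcube d a ℓ).Nonempty → ℓ ≤ sideLength d u → ∃ p ∈ P, p ∈ u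

open Set

lemma image_add_const_subset_hcube_iff {d : ℕ} {u : Set (Fin d → ℝ)} {a v : Fin d → ℝ} {ℓ : ℝ} :
    (fun x => x + v) '' u ⊆ hcube d (a + v) ℓ ↔ u ⊆ hcube d a ℓ := by
  rw [image_subset_iff]
  simp only [subset_def, hcube, mem_preimage, mem_ofPred_eq, Pi.add_apply]
  refine forall₂_congr fun x _ => forall_congr' fun i => ?_
  constructor <;> rintro ⟨h₁, h₂⟩ <;> constructor <;> linarith

lemma sideLength_image_add_const (d : ℕ) (u : Set (Fin d → ℝ)) (v : Fin d → ℝ) :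
    sideLength d ((fun x => x + v) '' u) = sideLength d u := by
  unfold sideLength
  congr 1
  ext ℓ
  refine and_congr_right fun _ => ⟨fun ⟨a, ha⟩ => ⟨a - v, ?_⟩,
    fun ⟨a, ha⟩ => ⟨a + v, image_add_const_subset_hcube_iff.2 ha⟩⟩
  rwa [← image_add_const_subset_hcube_iff, sub_add_cancel]

lemma exists_subset_hcube_of_sideLength_lt {d : ℕ} {u : Set (Fin d → ℝ)} {r : ℝ}
    (hpos : 0 < sideLength d u) (hr : sideLength d u < r) :
    ∃ a ℓ, ℓ < r ∧ u ⊆ hcube d a ℓ := by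
  have hne : {ℓ : ℝ | 0 ≤ ℓ ∧ ∃ a, u ⊆ hcube d a ℓ}.Nonempty := by
    by_contra h
    simp [sideLength, not_nonempty_iff_eq_empty.1 h] at hpos
  obtain ⟨ℓ, ⟨-, a, ha⟩, hℓ⟩ := exists_lt_of_csInf_lt hne hr
  exact ⟨a, ℓ, hℓ, ha⟩

lemma exists_two_zpow_neg_mem_Ioc {x : ℝ} (hx : 0 < x) :
    ∃ k : ℤ, (2 : ℝ) ^ (-k) ∈ Ioc x (2 * x) := by
  obtain ⟨e, he, he'⟩ := exists_mem_Ico_zpow hx one_lt_two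
  refine ⟨-(e + 1), ?_, ?_⟩ <;> rw [neg_neg]
  · exact he'
  · rw [zpow_add_one₀ two_ne_zero]; linarith

lemma Icc_subset_Ico_floor_of_forall_not_mem {s x y : ℝ} (hs : 0 < s)
    (h : ∀ m : ℤ, ¬ (x < m * s ∧ m * s ≤ y)) :
    Icc x y ⊆ Ico (⌊x / s⌋ * s) ((⌊x / s⌋ + 1) * s) := by
  rintro z ⟨hxz, hzy⟩
  have h₁ : ⌊x / s⌋ * s ≤ x := (le_div_iff₀ hs).1 (Int.floor_le _)
  have h₂ : x < (⌊x / s⌋ + 1) * s := (div_lt_iff₀ hs).1 (Int.lt_floor_add_one _)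
  have h₃ : y < (⌊x / s⌋ + 1) * s := by
    by_contra! h'
    exact h (⌊x / s⌋ + 1) ⟨by push_cast; exact h₂, by push_cast; exact h'⟩
  exact ⟨h₁.trans hxz, hzy.trans_lt h₃⟩

lemma isAligned_of_subset_hcube {d : ℕ} {C : ℝ} {v : Set (Fin d → ℝ)} {a : Fin d → ℝ} {ℓ : ℝ}
    {k : ℤ} (hk : (2 : ℝ) ^ (-k) ≤ C * sideLength d v) (hv : v ⊆ hcube d a ℓ)
    (hgrid : ∀ i (m : ℤ), ¬ (a i < m * (2 : ℝ) ^ (-k) ∧ m * (2 : ℝ) ^ (-k) ≤ a i + ℓ)) :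
    IsAligned d C v :=
  ⟨k, fun i => ⌊a i / 2 ^ (-k)⌋, hk, fun _ hx i =>
    Icc_subset_Ico_floor_of_forall_not_mem (by positivity) (hgrid i) (hv hx i)⟩

lemma subsingleton_shifts_meeting_grid {D N : ℕ} (hcop : D.Coprime N) {s x ℓ : ℝ}
    (hsN : s * N = 1) (hℓ : ℓ * D < s) :
    {j : Fin D | ∃ m : ℤ, x + j / D < m * s ∧ m * s ≤ x + j / D + ℓ}.Subsingleton := by
  rintro j₁ ⟨m₁, h₁, h₁'⟩ j₂ ⟨m₂, h₂, h₂'⟩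
  have hD : (0 : ℝ) < D := by exact_mod_cast j₁.pos
  have hN : (0 : ℝ) < N := Nat.cast_pos.2 (Nat.pos_of_ne_zero (by rintro rfl; simp at hsN))
  have hND : (0 : ℝ) < N * D := mul_pos hN hD
  have hlen : ℓ * (N * D) < 1 :=
    calc ℓ * (N * D) = ℓ * D * N := by ring
      _ < s * N := mul_lt_mul_of_pos_right hℓ hN
      _ = 1 := hsN
  have hscale (j : ℕ) (m : ℤ) (h : x + j / D < m * s) (h' : m * s ≤ x + j / D + ℓ) :
      ⌈x * (N * D)⌉ = m * D - j * N := by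
    have e : (m : ℝ) * D - j * N = (m * s - j / D) * (N * D) := by
      linear_combination (-(m : ℝ) * D) * hsN + (j * N : ℝ) * mul_inv_cancel₀ hD.ne'
    rw [Int.ceil_eq_iff]
    push_cast
    rw [e]
    constructor
    · nlinarith
    · exact mul_le_mul_of_nonneg_right (by linarith) hND.le
  have heq := (hscale j₁ m₁ h₁ h₁').symm.trans (hscale j₂ m₂ h₂ h₂')
  have hmod : j₁ * N ≡ j₂ * N [MOD D] := by
    rw [← Int.natCast_modEq_iff, Int.modEq_iff_dvd]
    exact ⟨m₂ - m₁, by push_cast; linear_combination heq⟩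
  exact Fin.ext ((Nat.ModEq.cancel_right_of_coprime hcop hmod).eq_of_lt_of_lt j₁.2 j₂.2)

lemma isAligned_image_add_of_two_le_zpow {d D : ℕ} {C : ℝ} {u : Set (Fin d → ℝ)}
    (hu : u ⊆ {x | ∀ i, 0 ≤ x i ∧ x i < 1}) {k : ℤ} (hbig : (2 : ℝ) ≤ 2 ^ (-k)) (j : Fin D)
    (hk : (2 : ℝ) ^ (-k) ≤ C * sideLength d ((fun x => x + fun _ => (j : ℝ) / D) '' u)) :
    IsAligned d C ((fun x => x + fun _ => (j : ℝ) / D) '' u) := by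
  refine ⟨k, 0, hk, ?_⟩
  rintro _ ⟨x, hx, rfl⟩ i
  have hj₀ : 0 ≤ (j : ℝ) / D := by positivity
  have hj₁ : (j : ℝ) / D < 1 := (div_lt_one (by exact_mod_cast j.pos)).2 (by exact_mod_cast j.isLt)
  have hxi := hu hx i
  simp only [Pi.add_apply, Pi.zero_apply, Int.cast_zero, zero_mul, zero_add, one_mul]
  constructor <;> linarith [hxi.1, hxi.2]

lemma ncard_le_card_of_subset_iUnion_subsingleton {ι α : Type*} [Fintype ι] {S : Set α}
    {B : ι → Set α} (hB : ∀ i, (B i).Subsingleton) (hS : S ⊆ ⋃ i, B i) :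
    S.ncard ≤ Fintype.card ι :=
  calc S.ncard ≤ (⋃ i, B i).ncard := ncard_le_ncard hS (finite_iUnion fun i => (hB i).finite)
    _ ≤ ∑ i, (B i).ncard := ncard_iUnion_le_of_fintype B
    _ ≤ ∑ _i : ι, 1 := Finset.sum_le_sum fun i _ => (ncard_le_one (hB i).finite).2 (hB i)
    _ = Fintype.card ι := by simp

theorem quadtree_shifting_general (d dstar : ℕ) (hodd : Odd dstar)
    (u : Set (Fin d → ℝ)) (hu : u ⊆ {x | ∀ i, 0 ≤ x i ∧ x i < 1})
    (hpos : 0 < sideLength d u) :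
    {j : Fin dstar | ¬ IsAligned d (2 * (dstar : ℝ))
        ((fun x => x + fun _ => (j : ℝ) / (dstar : ℝ)) '' u)}.ncard ≤ d := by
  have hD : (0 : ℝ) < dstar := by exact_mod_cast hodd.pos
  obtain ⟨k, hk_gt, hk_le⟩ := exists_two_zpow_neg_mem_Ioc (mul_pos hD hpos)
  have hcell (j : Fin dstar) : (2 : ℝ) ^ (-k) ≤
      2 * dstar * sideLength d ((fun x => x + fun _ => (j : ℝ) / dstar) '' u) := by
    rw [sideLength_image_add_const]; linarith
  rcases lt_or_ge k 0 with hk | hk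
  · have hbig : (2 : ℝ) ≤ 2 ^ (-k) := by
      simpa using zpow_le_zpow_right₀ (by norm_num : (1 : ℝ) ≤ 2) (show 1 ≤ -k by omega)
    simp only [fun j => isAligned_image_add_of_two_le_zpow hu hbig j (hcell j), not_true_eq_false,
      ofPred_false, ncard_empty, zero_le]
  · lift k to ℕ using hk
    obtain ⟨a, ℓ, hℓ, hua⟩ :=
      exists_subset_hcube_of_sideLength_lt hpos ((lt_div_iff₀' hD).2 hk_gt)
    have hsN : (2 : ℝ) ^ (-(k : ℤ)) * (2 ^ k : ℕ) = 1 := by simp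
    refine (ncard_le_card_of_subset_iUnion_subsingleton
      (fun i => subsingleton_shifts_meeting_grid (x := a i) (hodd.coprime_two_right.pow_right k)
        hsN ((lt_div_iff₀ hD).1 hℓ)) ?_).trans (Fintype.card_fin d).le
    intro j hj
    by_contra! h
    simp only [mem_iUnion, not_exists] at h
    exact hj (isAligned_of_subset_hcube (hcell j) (image_add_const_subset_hcube_iff.2 hua)
      fun i m hm => h i ⟨m, hm⟩)

/-- Quadtree shifting lemma: for odd `d* > d` and shifts `τ⁽ʲ⁾ = (j/d*, …, j/d*)`,
for any object `u ⊆ [0,1)^d` of positive side length, the shifted object `u + τ⁽ʲ⁾`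
fails to be `(2d*)`-aligned for at most `d` of the indices `j ∈ {0,…,d*−1}`. -/
theorem quadtree_shifting (d dstar : ℕ) (hodd : Odd dstar) (hd : d < dstar)
    (u : Set (Fin d → ℝ)) (hu : u ⊆ {x | ∀ i, 0 ≤ x i ∧ x i < 1})
    (hpos : 0 < sideLength d u) :
    {j : Fin dstar | ¬ IsAligned d (2 * (dstar : ℝ))
        ((fun x => x + fun _ => (j : ℝ) / (dstar : ℝ)) '' u)}.ncard ≤ d :=
  quadtree_shifting_general d dstar hodd u hu hpos
end

section
/- For any finite set of n points in R^d, there exists a quadtree cell γ such that the number of points strictly inside γ and the number of points outside γ are each at most (2^d/(2^d+1))·n. -/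
/-! ### Auxiliary machinery for the quadtree centroid lemma -/

/-- The index of the quadtree cell at level `k` containing `x`. -/
noncomputable def cellIdx (d : ℕ) (k : ℤ) (x : Fin d → ℝ) : Fin d → ℤ :=
  fun i => ⌊x i * (2:ℝ) ^ k⌋

lemma mem_qtCell_iff {d : ℕ} {k : ℤ} {c : Fin d → ℤ} {x : Fin d → ℝ} :
    x ∈ qtCell d k c ↔ cellIdx d k x = c := by
  have hp : (0:ℝ) < (2:ℝ) ^ k := zpow_pos (by norm_num) k
  have e : ∀ y : ℝ, y * (2:ℝ) ^ (-k) = y / (2:ℝ) ^ k := by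
    intro y; rw [zpow_neg, div_eq_mul_inv]
  constructor
  · intro h; funext i
    obtain ⟨h1, h2⟩ := h i
    rw [e] at h1 h2
    rw [div_le_iff₀ hp] at h1
    rw [lt_div_iff₀ hp] at h2
    refine Int.floor_eq_iff.mpr ⟨h1, ?_⟩
    linarith
  · intro h i
    have h1 : (c i : ℝ) ≤ x i * 2 ^ k := by
      rw [← h]; exact Int.floor_le _
    have h2 : x i * 2 ^ k < (c i : ℝ) + 1 := by
      rw [← h]; exact Int.lt_floor_add_one _
    rw [e, e]
    exact ⟨(div_le_iff₀ hp).mpr h1, (lt_div_iff₀ hp).mpr h2⟩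

lemma self_mem_cell {d : ℕ} {k : ℤ} {x : Fin d → ℝ} : x ∈ qtCell d k (cellIdx d k x) :=
  mem_qtCell_iff.mpr rfl

lemma dist_lt_of_same_cell {d : ℕ} {k : ℤ} {x y : Fin d → ℝ}
    (h : cellIdx d k x = cellIdx d k y) : dist x y < (2:ℝ) ^ (-k) := by
  have hp : (0:ℝ) < (2:ℝ) ^ (-k) := zpow_pos (by norm_num) _
  rw [dist_pi_lt_iff hp]
  intro i
  have hx := self_mem_cell (d := d) (k := k) (x := x) i
  have hy := self_mem_cell (d := d) (k := k) (x := y) i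
  rw [h] at hx
  rw [Real.dist_eq, abs_sub_lt_iff]
  constructor <;> nlinarith [hx.1, hx.2, hy.1, hy.2]

/-- Index of a child cell. -/
def childIdx {d : ℕ} (c : Fin d → ℤ) (b : Fin d → Bool) : Fin d → ℤ :=
  fun i => 2 * c i + (if b i then 1 else 0)

lemma cellIdx_succ {d : ℕ} {k : ℤ} {x : Fin d → ℝ} {c : Fin d → ℤ}
    (h : cellIdx d k x = c) (i : Fin d) :
    cellIdx d (k+1) x i = 2 * c i ∨ cellIdx d (k+1) x i = 2 * c i + 1 := by
  have h1 : (c i : ℝ) ≤ x i * 2 ^ k := by rw [← h]; exact Int.floor_le _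
  have h2 : x i * 2 ^ k < (c i : ℝ) + 1 := by rw [← h]; exact Int.lt_floor_add_one _
  have he : x i * (2:ℝ) ^ (k+1) = (x i * 2 ^ k) * 2 := by
    rw [zpow_add_one₀ (by norm_num : (2:ℝ) ≠ 0)]; ring
  have hlo : (2 * c i : ℤ) ≤ cellIdx d (k+1) x i := by
    apply Int.le_floor.mpr; rw [he]; push_cast; linarith
  have hhi : cellIdx d (k+1) x i < 2 * c i + 2 := by
    apply Int.floor_lt.mpr; rw [he]; push_cast; linarith
  omega

lemma child_of {d : ℕ} {k : ℤ} {x : Fin d → ℝ} {c : Fin d → ℤ}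
    (h : cellIdx d k x = c) :
    cellIdx d (k+1) x = childIdx c (fun i => decide (cellIdx d (k+1) x i = 2 * c i + 1)) := by
  funext i
  rcases cellIdx_succ h i with h' | h' <;> simp [childIdx, h']

lemma parent_le_sum {d : ℕ} {k : ℤ} {c : Fin d → ℤ} (P : Finset (Fin d → ℝ)) :
    (P.filter (fun x => cellIdx d k x = c)).card ≤
      ∑ b : Fin d → Bool, (P.filter (fun x => cellIdx d (k+1) x = childIdx c b)).card := by
  rw [Finset.card_eq_sum_card_fiberwise
    (f := fun x => (fun i => decide (cellIdx d (k+1) x i = 2 * c i + 1)))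
    (t := Finset.univ) (fun x _ => Finset.mem_univ _)]
  apply Finset.sum_le_sum
  intro b _
  apply Finset.card_le_card
  intro x hx
  simp only [Finset.mem_filter] at hx ⊢
  obtain ⟨⟨hxP, hxc⟩, hb⟩ := hx
  exact ⟨hxP, by rw [child_of hxc, hb]⟩

lemma coarse_cell {d : ℕ} (P : Finset (Fin d → ℝ)) (hne : P.Nonempty) :
    ∃ (k : ℤ) (c : Fin d → ℤ),
      P.card ≤ 2 ^ d * (P.filter (fun x => cellIdx d k x = c)).card := by
  obtain ⟨m, hm⟩ := pow_unbounded_of_one_lt (P.sup' hne (fun x => ‖x‖)) (by norm_num : (1:ℝ) < 2)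
  set k : ℤ := -(m : ℤ) with hk
  have hmem : ∀ x ∈ P, ∀ i, cellIdx d k x i ∈ ({-1, 0} : Finset ℤ) := by
    intro x hx i
    have h1 : |x i| ≤ P.sup' hne (fun x => ‖x‖) := by
      calc |x i| = ‖x i‖ := rfl
        _ ≤ ‖x‖ := norm_le_pi_norm x i
        _ ≤ _ := Finset.le_sup' _ hx
    have h2 : |x i| < 2 ^ m := lt_of_le_of_lt h1 hm
    have hpow : ((2:ℝ) ^ k) = ((2:ℝ) ^ m)⁻¹ := by
      rw [hk, zpow_neg, zpow_natCast]
    have hpos : (0:ℝ) < 2 ^ m := by positivity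
    have habs : |x i * (2:ℝ) ^ k| < 1 := by
      rw [abs_mul, hpow, abs_of_pos (by positivity : (0:ℝ) < ((2:ℝ)^m)⁻¹)]
      calc |x i| * ((2:ℝ) ^ m)⁻¹ < 2 ^ m * ((2:ℝ) ^ m)⁻¹ :=
            mul_lt_mul_of_pos_right h2 (by positivity)
        _ = 1 := mul_inv_cancel₀ (ne_of_gt hpos)
    rw [abs_lt] at habs
    have hlo : (-1 : ℤ) ≤ cellIdx d k x i := Int.le_floor.mpr (by push_cast; linarith [habs.1])
    have hhi : cellIdx d k x i < 1 := Int.floor_lt.mpr (by push_cast; linarith [habs.2])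
    simp only [Finset.mem_insert, Finset.mem_singleton]
    omega
  set f : (Fin d → ℝ) → (Fin d → ℤ) := cellIdx d k
  have himg : (P.image f).card ≤ 2 ^ d := by
    have hsub : P.image f ⊆ Fintype.piFinset (fun _ : Fin d => ({-1, 0} : Finset ℤ)) := by
      intro c hc
      obtain ⟨x, hx, rfl⟩ := Finset.mem_image.mp hc
      exact Fintype.mem_piFinset.mpr (hmem x hx)
    calc (P.image f).card ≤ _ := Finset.card_le_card hsub
      _ = ∏ _i : Fin d, 2 := by rw [Fintype.card_piFinset]; simp
      _ = 2 ^ d := by simp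
  obtain ⟨c, hc, hmax⟩ := Finset.exists_max_image (P.image f)
    (fun c => (P.filter (fun x => f x = c)).card) (hne.image f)
  refine ⟨k, c, ?_⟩
  calc P.card = ∑ b ∈ P.image f, (P.filter (fun x => f x = b)).card :=
        Finset.card_eq_sum_card_fiberwise (fun x hx => Finset.mem_image_of_mem f hx)
    _ ≤ (P.image f).card • (P.filter (fun x => f x = c)).card :=
        Finset.sum_le_card_nsmul _ _ _ (fun b hb => hmax b hb)
    _ ≤ 2 ^ d * (P.filter (fun x => f x = c)).card := by
        rw [smul_eq_mul]; exact Nat.mul_le_mul_right _ himg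

lemma sep_level {d : ℕ} (P : Finset (Fin d → ℝ)) :
    ∃ ksep : ℤ, ∀ k : ℤ, ksep ≤ k → ∀ p q : Fin d → ℝ, p ∈ P → q ∈ P → p ≠ q →
      cellIdx d k p ≠ cellIdx d k q := by
  classical
  set Dp := (P ×ˢ P).filter (fun z => z.1 ≠ z.2) with hDp
  by_cases hne : Dp.Nonempty
  · set δ := Dp.inf' hne (fun z => dist z.1 z.2) with hδ
    have hδpos : 0 < δ := by
      rw [hδ, Finset.lt_inf'_iff]
      intro z hz
      exact dist_pos.mpr (Finset.mem_filter.mp hz).2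
    obtain ⟨m, hm⟩ := exists_pow_lt_of_lt_one hδpos (by norm_num : (1:ℝ)/2 < 1)
    refine ⟨m, fun k hk p q hp hq hpq hcell => ?_⟩
    have h1 : dist p q < (2:ℝ) ^ (-k) := dist_lt_of_same_cell hcell
    have h2 : (2:ℝ) ^ (-k) ≤ (2:ℝ) ^ (-(m:ℤ)) :=
      zpow_le_zpow_right₀ one_le_two (by omega)
    have h3 : (2:ℝ) ^ (-(m:ℤ)) = ((1:ℝ)/2) ^ m := by
      rw [zpow_neg, zpow_natCast, one_div, inv_pow]
    have h4 : δ ≤ dist p q := by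
      have hmemD : (p, q) ∈ Dp :=
        Finset.mem_filter.mpr ⟨Finset.mem_product.mpr ⟨hp, hq⟩, hpq⟩
      exact Finset.inf'_le _ hmemD
    linarith
  · refine ⟨0, fun k _ p q hp hq hpq _ => ?_⟩
    exact hne ⟨(p, q), Finset.mem_filter.mpr ⟨Finset.mem_product.mpr ⟨hp, hq⟩, hpq⟩⟩

/-- Quadtree centroid lemma: for any set of `n ≥ 2` points in `ℝ^d` there is a quadtree
cell `γ` with at most `(2^d/(2^d+1))·n` of the points inside `γ` and at most
`(2^d/(2^d+1))·n` of the points outside `γ`. -/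
theorem quadtree_centroid (d : ℕ) (P : Finset (Fin d → ℝ)) (hP : 2 ≤ P.card) :
    ∃ γ : Set (Fin d → ℝ), IsQuadtreeCell d γ ∧
      ((((P : Set (Fin d → ℝ)) ∩ γ).ncard : ℝ) ≤
        2 ^ d * P.card / (2 ^ d + 1)) ∧
      ((((P : Set (Fin d → ℝ)) \ γ).ncard : ℝ) ≤
        2 ^ d * P.card / (2 ^ d + 1)) := by
  classical
  have hDpos : (0:ℝ) < 2 ^ d := by positivity
  have hD1 : (0:ℝ) < 2 ^ d + 1 := by positivity
  have hn2 : (2:ℝ) ≤ P.card := by exact_mod_cast hP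
  suffices h : ∃ (k : ℤ) (c : Fin d → ℤ),
      (((P.filter (fun x => cellIdx d k x = c)).card : ℝ) ≤ 2 ^ d * P.card / (2 ^ d + 1)) ∧
      ((P.card : ℝ) - (P.filter (fun x => cellIdx d k x = c)).card ≤
        2 ^ d * P.card / (2 ^ d + 1)) by
    obtain ⟨k, c, h1, h2⟩ := h
    refine ⟨qtCell d k c, ⟨k, c, rfl⟩, ?_, ?_⟩
    · have e1 : ((P : Set (Fin d → ℝ)) ∩ qtCell d k c) =
          ↑(P.filter (fun x => cellIdx d k x = c)) := by
        ext x
        simp [Set.mem_inter_iff, mem_qtCell_iff]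
      rw [e1, Set.ncard_coe_finset]
      exact h1
    · have e2 : ((P : Set (Fin d → ℝ)) \ qtCell d k c) =
          ↑(P.filter (fun x => ¬ cellIdx d k x = c)) := by
        ext x
        simp [Set.mem_diff, mem_qtCell_iff]
      rw [e2, Set.ncard_coe_finset]
      have hadd := Finset.card_filter_add_card_filter_not
        (s := P) (p := fun x => cellIdx d k x = c)
      have : ((P.filter (fun x => ¬ cellIdx d k x = c)).card : ℝ) =
          (P.card : ℝ) - (P.filter (fun x => cellIdx d k x = c)).card := by
        have := congrArg (fun t : ℕ => (t : ℝ)) hadd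
        push_cast at this
        linarith
      rw [this]
      exact h2
  obtain ⟨p₀, hp₀, q₀, hq₀, hpq₀⟩ := Finset.one_lt_card.mp hP
  obtain ⟨ksep, hsep⟩ := sep_level P
  by_cases hsmall : (P.card : ℝ) ≤ 2 ^ d + 1
  · -- small case: a cell containing exactly one point works
    refine ⟨ksep, cellIdx d ksep p₀, ?_⟩
    have hfil : P.filter (fun x => cellIdx d ksep x = cellIdx d ksep p₀) = {p₀} := by
      ext r
      simp only [Finset.mem_filter, Finset.mem_singleton]
      constructor
      · rintro ⟨hr, hcell⟩
        by_contra hne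
        exact hsep ksep le_rfl r p₀ hr hp₀ hne hcell
      · rintro rfl
        exact ⟨hp₀, rfl⟩
    rw [hfil]
    simp only [Finset.card_singleton, Nat.cast_one]
    constructor
    · rw [le_div_iff₀ hD1]
      nlinarith
    · rw [sub_le_iff_le_add, div_add' _ _ _ (ne_of_gt hD1), le_div_iff₀ hD1]
      nlinarith
  · push_neg at hsmall
    -- big case: descend to the deepest level with a heavy cell
    set Q : ℤ → Prop := fun k => ∃ c : Fin d → ℤ,
      (P.card : ℝ) ≤ (2 ^ d + 1) * (P.filter (fun x => cellIdx d k x = c)).card with hQ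
    have Hinh : ∃ k, Q k := by
      obtain ⟨k₀, c₀, hk₀⟩ := coarse_cell P ⟨p₀, hp₀⟩
      refine ⟨k₀, c₀, ?_⟩
      have : (P.card : ℝ) ≤ 2 ^ d * (P.filter (fun x => cellIdx d k₀ x = c₀)).card := by
        exact_mod_cast hk₀
      nlinarith [Nat.cast_nonneg (α := ℝ) (P.filter (fun x => cellIdx d k₀ x = c₀)).card]
    have Hbdd : ∃ b : ℤ, ∀ z, Q z → z ≤ b := by
      refine ⟨ksep - 1, fun k hk => ?_⟩
      obtain ⟨c, hc⟩ := hk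
      have hcnt : 1 < (P.filter (fun x => cellIdx d k x = c)).card := by
        by_contra hle
        push_neg at hle
        have : ((P.filter (fun x => cellIdx d k x = c)).card : ℝ) ≤ 1 := by
          exact_mod_cast hle
        nlinarith
      obtain ⟨p, hp, q, hq, hpq⟩ := Finset.one_lt_card.mp hcnt
      simp only [Finset.mem_filter] at hp hq
      have hcell : cellIdx d k p = cellIdx d k q := by rw [hp.2, hq.2]
      by_contra hk'
      push_neg at hk'
      exact hsep k (by omega) p q hp.1 hq.1 hpq hcell
    obtain ⟨k', hQk', hmax⟩ := Int.exists_greatest_of_bdd Hbdd Hinh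
    obtain ⟨c', hc'⟩ := hQk'
    have hnot : ∀ c : Fin d → ℤ,
        ((2:ℝ) ^ d + 1) * (P.filter (fun x => cellIdx d (k'+1) x = c)).card < P.card := by
      intro c
      by_contra hcon
      push_neg at hcon
      have := hmax (k' + 1) ⟨c, hcon⟩
      omega
    set m : ℕ := (P.filter (fun x => cellIdx d k' x = c')).card with hm
    have hsum : (m : ℝ) ≤
        ∑ b : Fin d → Bool, ((P.filter (fun x => cellIdx d (k'+1) x = childIdx c' b)).card : ℝ) := by
      have := parent_le_sum (k := k') (c := c') P
      exact_mod_cast this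
    have hstrict : ∑ b : Fin d → Bool,
        ((P.filter (fun x => cellIdx d (k'+1) x = childIdx c' b)).card : ℝ) <
        ∑ _b : Fin d → Bool, (P.card : ℝ) / (2 ^ d + 1) := by
      apply Finset.sum_lt_sum_of_nonempty Finset.univ_nonempty
      intro b _
      rw [lt_div_iff₀ hD1]
      have := hnot (childIdx c' b)
      linarith
    have hconst : ∑ _b : Fin d → Bool, (P.card : ℝ) / (2 ^ d + 1) =
        2 ^ d * ((P.card : ℝ) / (2 ^ d + 1)) := by
      rw [Finset.sum_const, Finset.card_univ]
      simp [Fintype.card_fun, nsmul_eq_mul]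
    have hm_hi : (m : ℝ) < 2 ^ d * P.card / (2 ^ d + 1) := by
      rw [mul_div_assoc]
      calc (m : ℝ) ≤ _ := hsum
        _ < _ := hstrict
        _ = _ := hconst
    refine ⟨k', c', le_of_lt hm_hi, ?_⟩
    rw [sub_le_iff_le_add, div_add' _ _ _ (ne_of_gt hD1), le_div_iff₀ hD1]
    have hm_lo : (P.card : ℝ) ≤ (2 ^ d + 1) * m := hc'
    nlinarith
end

section
/- Given a parameter r and any set of n points in [0,2)^d, there exists a partition of [0,2)^d into O(n/r) generalized quadtree cells, each containing at most r of the points, where a generalized quadtree cell is either a quadtree cell or the set difference of an outer quadtree cell and one inner quadtree cell contained in it. -/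
/-- A generalized quadtree cell: a quadtree cell, or the difference of an outer quadtree
cell and an inner quadtree cell contained in it. -/
def IsGenQuadtreeCell (d : ℕ) (γ : Set (Fin d → ℝ)) : Prop :=
  IsQuadtreeCell d γ ∨
    ∃ γp γm : Set (Fin d → ℝ), IsQuadtreeCell d γp ∧ IsQuadtreeCell d γm ∧
      γm ⊆ γp ∧ γ = γp \ γm

/-!
For a cell `σ` holding `n > r` points, descend from `σ` into the heaviest child for as long as
at most `r` points are left outside. Since finitely many points are separated at some depth,
this stops at a cell `τ` whose heavy children (more than `r` points) each hold fewer than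
`n - r` points. The annulus `σ \ τ` is one generalized cell, and the `2^d` children of `τ`
are partitioned recursively. The count is controlled by the potential `2n - r` of a heavy
cell: over the heavy children `b` of `τ`, `r + ∑ (2 n_b - r) ≤ 2n - r`, because `n > r`
when there is no heavy child, `n_b ≤ n - r` when there is one, and `∑ n_b ≤ n` when there
are several. Hence a partition `S` of a cell with `n > r` points has
`r (|S| - 1) ≤ 2^d (2n - r)`.
-/

open Finset

theorem Int.floor_eq_iff_floor_two_mul_mem_Icc {K : Type*} [Field K] [LinearOrder K]
    [IsStrictOrderedRing K] [FloorRing K] (a : K) (z : ℤ) :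
    ⌊a⌋ = z ↔ ⌊2 * a⌋ ∈ Icc (2 * z) (2 * z + 1) := by
  have h : ⌊a⌋ = ⌊2 * a⌋ / (2 : ℕ) := by
    rw [← Int.floor_div_natCast]; congr 1; push_cast; ring
  rw [h, mem_Icc]
  omega

namespace QuadtreePartition

section pointCount

variable {α : Type*}

noncomputable def pointCount (Q : Finset α) (s : Set α) : ℕ :=
  ((Q : Set α) ∩ s).ncard

variable {Q : Finset α} {s t : Set α}

theorem pointCount_mono (h : s ⊆ t) : pointCount Q s ≤ pointCount Q t :=
  Set.ncard_le_ncard (Set.inter_subset_inter_right _ h) (Q.finite_toSet.inter_of_left t)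

theorem pointCount_le_card : pointCount Q s ≤ #Q :=
  (Set.ncard_le_ncard Set.inter_subset_left Q.finite_toSet).trans_eq (Set.ncard_coe_finset Q)

theorem pointCount_diff_add (h : t ⊆ s) :
    pointCount Q (s \ t) + pointCount Q t = pointCount Q s := by
  rw [pointCount, pointCount, Set.inter_sdiff_distrib_left]
  exact Set.ncard_sdiff_add_ncard_of_subset (Set.inter_subset_inter_right _ h)
    (Q.finite_toSet.inter_of_left s)

theorem pointCount_biUnion {ι : Type*} {J : Finset ι} {s : ι → Set α}
    (hs : (J : Set ι).PairwiseDisjoint s) :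
    pointCount Q (⋃ j ∈ J, s j) = ∑ j ∈ J, pointCount Q (s j) := by
  rw [pointCount, Set.inter_iUnion₂, ← finsum_mem_coe_finset]
  exact J.finite_toSet.ncard_biUnion (fun j _ => Q.finite_toSet.inter_of_left _)
    fun i hi j hj hij => ((hs hi hj hij).inter_left' _).inter_right' _

end pointCount

variable {d : ℕ}

theorem mem_qtCell_iff {k : ℤ} {c : Fin d → ℤ} {x : Fin d → ℝ} :
    x ∈ qtCell d k c ↔ ∀ i, ⌊x i * 2 ^ k⌋ = c i := by
  have h2 : (0 : ℝ) < 2 ^ k := zpow_pos two_pos k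
  simp only [qtCell, Set.mem_ofPred_eq, Int.floor_eq_iff, zpow_neg, ← div_eq_mul_inv,
    div_le_iff₀ h2, lt_div_iff₀ h2]

theorem pairwise_disjoint_qtCell (k : ℤ) : Pairwise (Function.onFun Disjoint (qtCell d k)) := by
  intro c c' hne
  refine Set.disjoint_left.mpr fun x hx hx' => hne (funext fun i => ?_)
  rw [← mem_qtCell_iff.mp hx i, ← mem_qtCell_iff.mp hx' i]

theorem cube_eq_qtCell : {x : Fin d → ℝ | ∀ i, 0 ≤ x i ∧ x i < 2} = qtCell d (-1) 0 := by
  ext x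
  simp [qtCell]

/-- The indices of the children of `qtCell d k c`, which are cells of level `k + 1`. -/
noncomputable def qtChildren (c : Fin d → ℤ) : Finset (Fin d → ℤ) :=
  Fintype.piFinset fun i => Icc (2 * c i) (2 * c i + 1)

theorem card_qtChildren (c : Fin d → ℤ) : #(qtChildren c) = 2 ^ d := by
  simp [qtChildren, show ∀ z : ℤ, (2 * z + 1 + 1 - 2 * z).toNat = 2 by omega]

theorem qtCell_eq_biUnion_qtChildren (k : ℤ) (c : Fin d → ℤ) :
    qtCell d k c = ⋃ c' ∈ qtChildren c, qtCell d (k + 1) c' := by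
  have hk : ∀ a : ℝ, a * 2 ^ (k + 1) = 2 * (a * 2 ^ k) := fun a => by
    rw [zpow_add_one₀ two_ne_zero]; ring
  ext x
  simp only [Set.mem_iUnion, mem_qtCell_iff, qtChildren, Fintype.mem_piFinset, hk, exists_prop]
  simp only [Int.floor_eq_iff_floor_two_mul_mem_Icc (x _ * 2 ^ k)]
  constructor
  · intro h
    exact ⟨fun i => ⌊2 * (x i * 2 ^ k)⌋, h, fun i => rfl⟩
  · rintro ⟨c', hc', hx⟩ i
    rw [hx i]
    exact hc' i

theorem qtCell_subset_of_mem_qtChildren {k : ℤ} {c c' : Fin d → ℤ} (h : c' ∈ qtChildren c) :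
    qtCell d (k + 1) c' ⊆ qtCell d k c := by
  rw [qtCell_eq_biUnion_qtChildren k c]
  exact Set.subset_biUnion_of_mem (u := fun c' => qtCell d (k + 1) c') h

theorem eventually_pointCount_qtCell_le_one (Q : Finset (Fin d → ℝ)) :
    ∀ᶠ k in Filter.atTop, ∀ c, pointCount Q (qtCell d k c) ≤ 1 := by
  suffices h : ∀ x ∈ Q, ∀ y ∈ Q, ∀ᶠ k in Filter.atTop,
      ∀ c, x ∈ qtCell d k c → y ∈ qtCell d k c → x = y by
    simp only [← Filter.eventually_all_finset] at h
    filter_upwards [h] with k hk c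
    exact Set.ncard_le_one_iff (Q.finite_toSet.inter_of_left _) |>.mpr
      fun hx hy => hk _ hx.1 _ hy.1 c hx.2 hy.2
  intro x _ y _
  by_cases hxy : x = y
  · exact Filter.Eventually.of_forall fun _ _ _ _ => hxy
  obtain ⟨i, hi⟩ := Function.ne_iff.mp hxy
  have hδ : 0 < |x i - y i| := abs_pos.mpr (sub_ne_zero.mpr hi)
  obtain ⟨n, hn⟩ := pow_unbounded_of_one_lt |x i - y i|⁻¹ one_lt_two
  filter_upwards [Filter.eventually_ge_atTop (n : ℤ)] with k hk c hx hy
  have hfloor : ⌊x i * 2 ^ k⌋ = ⌊y i * 2 ^ k⌋ := by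
    rw [mem_qtCell_iff.mp hx i, mem_qtCell_iff.mp hy i]
  have hlt := Int.abs_sub_lt_one_of_floor_eq_floor hfloor
  have hpow : (2 : ℝ) ^ n ≤ 2 ^ k := by
    rw [← zpow_natCast]; exact zpow_le_zpow_right₀ one_le_two hk
  rw [← sub_mul, abs_mul, abs_of_pos (zpow_pos (two_pos : (0 : ℝ) < 2) k)] at hlt
  rw [inv_lt_iff_one_lt_mul₀ hδ] at hn
  nlinarith

/-- Descend greedily into the child with the most points as long as at most `r` points of `σ`
are left outside; the descent must stop before the cells hold a single point. -/
theorem exists_core_qtCell {r : ℕ} (hr : 1 ≤ r) (Q : Finset (Fin d → ℝ)) (σ : Set (Fin d → ℝ))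
    (K : ℕ) (k : ℤ) (c : Fin d → ℤ) (hsub : qtCell d k c ⊆ σ)
    (hout : pointCount Q (σ \ qtCell d k c) ≤ r)
    (hsep : ∀ c', pointCount Q (qtCell d (k + K) c') ≤ 1) :
    ∃ k' c', qtCell d k' c' ⊆ σ ∧ pointCount Q (σ \ qtCell d k' c') ≤ r ∧
      ∀ c'' ∈ qtChildren c', r < pointCount Q (qtCell d (k' + 1) c'') →
        pointCount Q (qtCell d (k' + 1) c'') + r < pointCount Q σ := by
  induction K generalizing k c with
  | zero =>
    refine ⟨k, c, hsub, hout, fun c'' hc'' hheavy => absurd hheavy ?_⟩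
    have := (pointCount_mono (qtCell_subset_of_mem_qtChildren hc'')).trans (hsep c)
    simp only [Nat.cast_zero, add_zero] at this
    omega
  | succ K ih =>
    have hne : (qtChildren c).Nonempty := card_pos.mp (by simp [card_qtChildren])
    obtain ⟨c₀, hc₀, hmax⟩ :=
      exists_max_image _ (fun c' => pointCount Q (qtCell d (k + 1) c')) hne
    have hsub₀ := (qtCell_subset_of_mem_qtChildren hc₀).trans hsub
    by_cases hout₀ : pointCount Q (σ \ qtCell d (k + 1) c₀) ≤ r
    · refine ih (k + 1) c₀ hsub₀ hout₀ fun c' => ?_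
      simpa only [Nat.cast_succ, add_assoc, add_comm (1 : ℤ)] using hsep c'
    · refine ⟨k, c, hsub, hout, fun c'' hc'' _ => ?_⟩
      have := pointCount_diff_add (Q := Q) hsub₀
      have := hmax c'' hc''
      omega

structure IsCellPartition (r : ℕ) (Q : Finset (Fin d → ℝ)) (S : Finset (Set (Fin d → ℝ)))
    (σ : Set (Fin d → ℝ)) : Prop where
  isGenQuadtreeCell : ∀ γ ∈ S, IsGenQuadtreeCell d γ
  pairwiseDisjoint : (S : Set (Set (Fin d → ℝ))).PairwiseDisjoint id
  sUnion_eq : ⋃₀ (S : Set (Set (Fin d → ℝ))) = σ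
  pointCount_le : ∀ γ ∈ S, pointCount Q γ ≤ r

namespace IsCellPartition

variable {r : ℕ} {Q : Finset (Fin d → ℝ)}

theorem singleton {γ : Set (Fin d → ℝ)} (hγ : IsGenQuadtreeCell d γ) (h : pointCount Q γ ≤ r) :
    IsCellPartition r Q {γ} γ where
  isGenQuadtreeCell := by simpa using hγ
  pairwiseDisjoint := by simp
  sUnion_eq := by simp
  pointCount_le := by simpa using h

theorem union {S T : Finset (Set (Fin d → ℝ))} {σ τ : Set (Fin d → ℝ)}
    (hS : IsCellPartition r Q S σ) (hT : IsCellPartition r Q T τ) (hστ : Disjoint σ τ) :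
    IsCellPartition r Q (S ∪ T) (σ ∪ τ) where
  isGenQuadtreeCell γ hγ :=
    (mem_union.mp hγ).elim (hS.isGenQuadtreeCell γ) (hT.isGenQuadtreeCell γ)
  pairwiseDisjoint := by
    rw [coe_union]
    refine hS.pairwiseDisjoint.union hT.pairwiseDisjoint fun γ hγ γ' hγ' _ => ?_
    rw [← hS.sUnion_eq, ← hT.sUnion_eq] at hστ
    exact hστ.mono (Set.subset_sUnion_of_mem hγ) (Set.subset_sUnion_of_mem hγ')
  sUnion_eq := by rw [coe_union, Set.sUnion_union, hS.sUnion_eq, hT.sUnion_eq]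
  pointCount_le γ hγ := (mem_union.mp hγ).elim (hS.pointCount_le γ) (hT.pointCount_le γ)

theorem biUnion {ι : Type*} {J : Finset ι} {S : ι → Finset (Set (Fin d → ℝ))}
    {σ : ι → Set (Fin d → ℝ)} (hS : ∀ j ∈ J, IsCellPartition r Q (S j) (σ j))
    (hσ : (J : Set ι).PairwiseDisjoint σ) :
    IsCellPartition r Q (J.biUnion S) (⋃ j ∈ J, σ j) where
  isGenQuadtreeCell γ hγ := by
    obtain ⟨j, hj, hγ⟩ := mem_biUnion.mp hγ
    exact (hS j hj).isGenQuadtreeCell γ hγ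
  pairwiseDisjoint := by
    rw [coe_biUnion]
    refine Set.PairwiseDisjoint.biUnion_finset ?_ fun j hj => (hS j hj).pairwiseDisjoint
    intro i hi j hj hij
    simpa only [Function.onFun, sup_id_set_eq_sUnion, (hS i hi).sUnion_eq, (hS j hj).sUnion_eq]
      using hσ hi hj hij
  sUnion_eq := by
    simp only [coe_biUnion, Set.sUnion_iUnion]
    exact Set.iUnion₂_congr fun j hj => (hS j hj).sUnion_eq
  pointCount_le γ hγ := by
    obtain ⟨j, hj, hγ⟩ := mem_biUnion.mp hγ
    exact (hS j hj).pointCount_le γ hγ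

theorem exists_fin {S : Finset (Set (Fin d → ℝ))} {σ : Set (Fin d → ℝ)}
    (h : IsCellPartition r Q S σ) :
    ∃ γ : Fin #S → Set (Fin d → ℝ), (∀ i, IsGenQuadtreeCell d (γ i)) ∧
      Pairwise (Function.onFun Disjoint γ) ∧ (⋃ i, γ i) = σ ∧ ∀ i, pointCount Q (γ i) ≤ r := by
  refine ⟨fun i => S.equivFin.symm i, fun i => h.isGenQuadtreeCell _ (coe_mem _), ?_, ?_,
    fun i => h.pointCount_le _ (coe_mem _)⟩
  · intro i j hij
    exact h.pairwiseDisjoint (coe_mem _) (coe_mem _)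
      (Subtype.val_injective.ne (S.equivFin.symm.injective.ne hij))
  · rw [← h.sUnion_eq, Set.sUnion_eq_iUnion]
    exact S.equivFin.symm.iSup_comp (g := fun γ => γ.1)

end IsCellPartition

def potential (r n : ℕ) : ℕ := if r < n then 2 * n - r else 0

theorem potential_le_two_mul (r n : ℕ) : potential r n ≤ 2 * n := by
  unfold potential; split_ifs <;> omega

theorem two_mul_add_sum_potential_le {ι : Type*} (s : Finset ι) (f : ι → ℕ) {r n : ℕ}
    (hsum : ∑ i ∈ s, f i ≤ n) (hheavy : ∀ i ∈ s, r < f i → f i + r ≤ n) (hn : r < n) :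
    2 * r + ∑ i ∈ s, potential r (f i) ≤ 2 * n := by
  set H := s.filter fun i => r < f i
  have hsumH : ∑ i ∈ s, potential r (f i) = ∑ i ∈ H, (2 * f i - r) := by
    rw [sum_filter]; rfl
  have hH : ∑ i ∈ H, (2 * f i - r) + #H * r = 2 * ∑ i ∈ H, f i := by
    rw [← smul_eq_mul, ← sum_const, ← sum_add_distrib, mul_sum]
    exact sum_congr rfl fun i hi => by have := (mem_filter.mp hi).2; omega
  have hHn : ∑ i ∈ H, f i ≤ n := (sum_le_sum_of_subset (filter_subset _ s)).trans hsum
  rw [hsumH]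
  rcases Nat.lt_or_ge #H 2 with hH2 | hH2
  · interval_cases hcard : #H
    · simp [card_eq_zero.mp hcard]; omega
    · obtain ⟨i, hHi⟩ := card_eq_one.mp hcard
      have hi := mem_filter.mp (hHi ▸ mem_singleton_self i : i ∈ H)
      have := hheavy i hi.1 hi.2
      rw [hHi, sum_singleton]
      omega
  · have := Nat.mul_le_mul_right r hH2
    omega

theorem mul_card_insert_biUnion_sub_one_le {ι α : Type*} [DecidableEq α] {J : Finset ι}
    (a : α) {S : ι → Finset α} {f : ι → ℕ} {r n : ℕ}
    (hS : ∀ j ∈ J, r * (#(S j) - 1) ≤ #J * potential r (f j))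
    (hsum : ∑ j ∈ J, f j ≤ n) (hheavy : ∀ j ∈ J, r < f j → f j + r ≤ n) (hn : r < n) :
    r * (#(insert a (J.biUnion S)) - 1) ≤ #J * potential r n := by
  have hkey := two_mul_add_sum_potential_le J f hsum hheavy hn
  calc r * (#(insert a (J.biUnion S)) - 1)
      ≤ r * ∑ j ∈ J, #(S j) := by
        refine Nat.mul_le_mul_left _ ?_
        have := card_insert_le a (J.biUnion S)
        have := card_biUnion_le (s := J) (t := S)
        omega
    _ = ∑ j ∈ J, r * #(S j) := mul_sum _ _ _
    _ ≤ ∑ j ∈ J, (r + #J * potential r (f j)) := sum_le_sum fun j hj => by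
        have := hS j hj
        rw [Nat.mul_sub_one] at this
        omega
    _ = #J * (r + ∑ j ∈ J, potential r (f j)) := by
        rw [sum_add_distrib, sum_const, mul_add, mul_sum, smul_eq_mul, mul_comm]
    _ ≤ #J * potential r n := by
        refine Nat.mul_le_mul_left _ ?_
        rw [potential, if_pos hn]
        omega

theorem exists_isCellPartition_qtCell {r : ℕ} (hr : 1 ≤ r) (Q : Finset (Fin d → ℝ)) (k : ℤ)
    (c : Fin d → ℤ) : ∃ S, IsCellPartition r Q S (qtCell d k c) ∧
      r * (#S - 1) ≤ 2 ^ d * potential r (pointCount Q (qtCell d k c)) := by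
  induction hn : pointCount Q (qtCell d k c) using Nat.strong_induction_on generalizing k c with
  | _ n ih =>
  by_cases hnr : n ≤ r
  · exact ⟨{qtCell d k c}, .singleton (Or.inl ⟨k, c, rfl⟩) (hn ▸ hnr), by simp⟩
  rw [not_le] at hnr
  obtain ⟨K, hK⟩ : ∃ K : ℕ, ∀ c', pointCount Q (qtCell d (k + K) c') ≤ 1 := by
    obtain ⟨k₀, hk₀⟩ := Filter.eventually_atTop.mp (eventually_pointCount_qtCell_le_one Q)
    exact ⟨(k₀ - k).toNat, hk₀ _ (by omega)⟩
  obtain ⟨k', c', hsub, hout, hchild⟩ :=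
    exists_core_qtCell hr Q (qtCell d k c) K k c subset_rfl (by simp [pointCount]) hK
  have hchildren : (↑(qtChildren c') : Set (Fin d → ℤ)).PairwiseDisjoint (qtCell d (k' + 1)) :=
    (pairwise_disjoint_qtCell _).set_pairwise _
  have hsum : ∑ c'' ∈ qtChildren c', pointCount Q (qtCell d (k' + 1) c'') ≤ n := by
    rw [← pointCount_biUnion hchildren, ← qtCell_eq_biUnion_qtChildren, ← hn]
    exact pointCount_mono hsub
  have hheavy : ∀ c'' ∈ qtChildren c', r < pointCount Q (qtCell d (k' + 1) c'') →
      pointCount Q (qtCell d (k' + 1) c'') + r ≤ n :=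
    fun c'' h hr'' => hn ▸ (hchild c'' h hr'').le
  have hlt : ∀ c'' ∈ qtChildren c', pointCount Q (qtCell d (k' + 1) c'') < n := fun c'' h => by
    by_cases hr'' : r < pointCount Q (qtCell d (k' + 1) c'')
    · have := hheavy c'' h hr''; omega
    · omega
  choose! S hS hSbound using fun c'' (h : c'' ∈ qtChildren c') => ih _ (hlt c'' h) (k' + 1) c'' rfl
  refine ⟨insert (qtCell d k c \ qtCell d k' c') ((qtChildren c').biUnion S), ?_, ?_⟩
  · have hann : IsGenQuadtreeCell d (qtCell d k c \ qtCell d k' c') :=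
      Or.inr ⟨_, _, ⟨k, c, rfl⟩, ⟨k', c', rfl⟩, hsub, rfl⟩
    have := (IsCellPartition.singleton hann hout).union (.biUnion hS hchildren)
      (by rw [← qtCell_eq_biUnion_qtChildren]; exact Set.disjoint_sdiff_left)
    rwa [← qtCell_eq_biUnion_qtChildren, Set.sdiff_union_of_subset hsub, ← insert_eq] at this
  · rw [← card_qtChildren c'] at hSbound ⊢
    exact mul_card_insert_biUnion_sub_one_le _ hSbound hsum hheavy hnr

theorem natCast_le_mul_div_add_one {m r N C : ℕ} (hr : 1 ≤ r) (hC : 1 ≤ C)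
    (h : r * (m - 1) ≤ C * N) : (m : ℝ) ≤ C * (N / r + 1) := by
  have hr' : (0 : ℝ) < r := by exact_mod_cast hr
  have hm : (m : ℝ) ≤ ((m - 1 : ℕ) : ℝ) + 1 := by exact_mod_cast (by omega : m ≤ m - 1 + 1)
  have hdiv : ((m - 1 : ℕ) : ℝ) ≤ C * N / r := by
    rw [le_div_iff₀ hr', mul_comm]; exact_mod_cast h
  have hC' : (1 : ℝ) ≤ C := by exact_mod_cast hC
  rw [mul_add, mul_one, ← mul_div_assoc]
  linarith

end QuadtreePartition

open QuadtreePartition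

/-- Quadtree partitioning: given a parameter `r ≥ 1` and `n` points in `[0,2)^d`, the
cube `[0,2)^d` can be partitioned into `O(n/r)` generalized quadtree cells, each
containing at most `r` of the points. -/
theorem quadtree_partitioning (d : ℕ) :
    ∃ C : ℝ, 0 < C ∧ ∀ r : ℕ, 1 ≤ r →
      ∀ P : Finset (Fin d → ℝ), (P : Set (Fin d → ℝ)) ⊆ {x | ∀ i, 0 ≤ x i ∧ x i < 2} →
      ∃ (m : ℕ) (γ : Fin m → Set (Fin d → ℝ)),
        (∀ i, IsGenQuadtreeCell d (γ i)) ∧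
        Pairwise (Function.onFun Disjoint γ) ∧
        (⋃ i, γ i) = {x | ∀ i, 0 ≤ x i ∧ x i < 2} ∧
        (∀ i, ((P : Set (Fin d → ℝ)) ∩ γ i).ncard ≤ r) ∧
        (m : ℝ) ≤ C * ((P.card : ℝ) / r + 1) := by
  refine ⟨2 ^ (d + 1), by positivity, fun r hr P _ => ?_⟩
  obtain ⟨S, hS, hcard⟩ := exists_isCellPartition_qtCell hr P (-1) 0
  obtain ⟨γ, hγ, hdisj, hunion, hcount⟩ := hS.exists_fin
  refine ⟨#S, γ, hγ, hdisj, hunion.trans cube_eq_qtCell.symm, hcount, ?_⟩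
  have hbound : r * (#S - 1) ≤ 2 ^ (d + 1) * #P := by
    refine hcard.trans ?_
    rw [pow_succ, mul_assoc]
    exact Nat.mul_le_mul_left _ ((potential_le_two_mul _ _).trans
      (Nat.mul_le_mul_left 2 pointCount_le_card))
  exact_mod_cast natCast_le_mul_div_add_one hr Nat.one_le_two_pow hbound
end

section
/- The intersection graph of n horizontal segments and n vertical lines in the plane admits a 3-hop spanner with O(n) edges. -/
open Finset
open scoped Classical

noncomputable section

namespace HopChain

variable {ι : Type*} [Nonempty ι]

/-- argmax of `f` on `s` (junk if `s` is empty). -/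
noncomputable def amax {α : Type*} [LinearOrder α] (s : Finset ι) (f : ι → α) : ι :=
  if h : s.Nonempty then (s.exists_max_image f h).choose else Classical.arbitrary ι

lemma amax_mem {α : Type*} [LinearOrder α] {s : Finset ι} (f : ι → α) (h : s.Nonempty) :
    amax s f ∈ s := by
  rw [amax, dif_pos h]; exact (s.exists_max_image f h).choose_spec.1

lemma le_amax {α : Type*} [LinearOrder α] {s : Finset ι} (f : ι → α) (h : s.Nonempty) {i : ι}
    (hi : i ∈ s) : f i ≤ f (amax s f) := by
  rw [amax, dif_pos h]; exact (s.exists_max_image f h).choose_spec.2 i hi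

noncomputable def amin {α : Type*} [LinearOrder α] (s : Finset ι) (f : ι → α) : ι :=
  if h : s.Nonempty then (s.exists_min_image f h).choose else Classical.arbitrary ι

lemma amin_mem {α : Type*} [LinearOrder α] {s : Finset ι} (f : ι → α) (h : s.Nonempty) :
    amin s f ∈ s := by
  rw [amin, dif_pos h]; exact (s.exists_min_image f h).choose_spec.1

lemma amin_le {α : Type*} [LinearOrder α] {s : Finset ι} (f : ι → α) (h : s.Nonempty) {i : ι}
    (hi : i ∈ s) : f (amin s f) ≤ f i := by
  rw [amin, dif_pos h]; exact (s.exists_min_image f h).choose_spec.2 i hi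

variable (S : Finset ι) (l r : ι → ℝ)

def x0 : ℝ := if h : S.Nonempty then l (amin S l) - 1 else 0

def started (t : ℝ) : Finset ι := S.filter fun i => l i ≤ t
def active (t : ℝ) : Finset ι := S.filter fun i => l i ≤ t ∧ t < r i
def waiting (t : ℝ) : Finset ι := S.filter fun i => t < l i

def cset (t : ℝ) : Finset ι :=
  if (active S l r t).Nonempty then started S l t
  else if h : (waiting S l t).Nonempty then started S l (l (amin (waiting S l t) l))
  else ∅

def hub (t : ℝ) : ι := amax (cset S l r t) r

def step (t : ℝ) : ℝ := if (cset S l r t).Nonempty then r (hub S l r t) else t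

def x : ℕ → ℝ
  | 0 => x0 S l
  | j + 1 => step S l r (x j)

def C (k : ℕ) : ι := hub S l r (x S l r (k - 1))

/-- termination measure -/
def phi (t : ℝ) : ℕ :=
  (S.filter fun i => t < r i).card + (S.filter fun i => t < l i).card

def g (p : ℝ) : ℕ := if h : ∃ j, p ≤ x S l r j then Nat.find h else 0

variable {S l r}

lemma lt_x0 {i : ι} (hi : i ∈ S) : x0 S l < l i := by
  have hne : S.Nonempty := ⟨i, hi⟩
  rw [x0, dif_pos hne]
  have := amin_le l hne hi
  linarith

lemma cset_subset {t : ℝ} : cset S l r t ⊆ S := by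
  rw [cset]; split_ifs
  · exact filter_subset _ _
  · exact filter_subset _ _
  · exact empty_subset _

lemma step_eq {t : ℝ} (h : (cset S l r t).Nonempty) : step S l r t = r (hub S l r t) :=
  if_pos h

lemma hub_mem_cset {t : ℝ} (h : (cset S l r t).Nonempty) : hub S l r t ∈ cset S l r t :=
  amax_mem r h

lemma hub_mem_S {t : ℝ} (h : (cset S l r t).Nonempty) : hub S l r t ∈ S :=
  cset_subset (hub_mem_cset h)

lemma r_le_step_of_mem_cset {t : ℝ} {i : ι} (hi : i ∈ cset S l r t) : r i ≤ step S l r t := by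
  rw [step, if_pos ⟨i, hi⟩]
  exact le_amax r ⟨i, hi⟩ hi

lemma cset_eq_of_active {t : ℝ} (h : (active S l r t).Nonempty) :
    cset S l r t = started S l t := by rw [cset, if_pos h]

lemma active_subset_started {t : ℝ} : active S l r t ⊆ started S l t := by
  intro i hi
  rw [active, mem_filter] at hi
  exact mem_filter.mpr ⟨hi.1, hi.2.1⟩

lemma mem_cset_of_started {t : ℝ} (h : (active S l r t).Nonempty) {i : ι} (hi : i ∈ S)
    (hl : l i ≤ t) : i ∈ cset S l r t := by
  rw [cset_eq_of_active h, started, mem_filter]; exact ⟨hi, hl⟩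

lemma amin_waiting_mem_cset {t : ℝ} (ha : ¬ (active S l r t).Nonempty)
    (hw : (waiting S l t).Nonempty) : amin (waiting S l t) l ∈ cset S l r t := by
  rw [cset, if_neg ha, dif_pos hw, started, mem_filter]
  have := amin_mem l hw
  rw [waiting, mem_filter] at this
  exact ⟨this.1, le_rfl⟩

variable (hlr : ∀ i ∈ S, l i ≤ r i)
include hlr

lemma le_step {t : ℝ} : t ≤ step S l r t := by
  by_cases h : (cset S l r t).Nonempty
  · by_cases ha : (active S l r t).Nonempty
    · obtain ⟨i0, hi0⟩ := ha
      have hmem : i0 ∈ cset S l r t := by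
        rw [cset_eq_of_active ⟨i0, hi0⟩]; exact active_subset_started hi0
      have h1 : r i0 ≤ step S l r t := r_le_step_of_mem_cset hmem
      rw [active, mem_filter] at hi0
      linarith [hi0.2.2]
    · have hw : (waiting S l t).Nonempty := by
        by_contra hw
        rw [cset, if_neg ha, dif_neg hw] at h
        exact absurd h (by simp)
      have hmem := amin_waiting_mem_cset ha hw
      have h1 : r (amin (waiting S l t) l) ≤ step S l r t := r_le_step_of_mem_cset hmem
      have h2 : l (amin (waiting S l t) l) ≤ r (amin (waiting S l t) l) :=
        hlr _ (cset_subset hmem)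
      have h3 : t < l (amin (waiting S l t) l) := by
        have := amin_mem l hw
        rw [waiting, mem_filter] at this
        exact this.2
      linarith
  · rw [step, if_neg h]

lemma lt_step {t : ℝ} {i : ι} (hi : i ∈ S) (hc : t < l i ∨ (l i ≤ t ∧ t < r i)) :
    t < step S l r t := by
  by_cases ha : (active S l r t).Nonempty
  · obtain ⟨i0, hi0⟩ := ha
    have hmem : i0 ∈ cset S l r t := by
      rw [cset_eq_of_active ⟨i0, hi0⟩]; exact active_subset_started hi0
    have h1 : r i0 ≤ step S l r t := r_le_step_of_mem_cset hmem
    rw [active, mem_filter] at hi0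
    linarith [hi0.2.2]
  · rcases hc with hc | hc
    · have hw : (waiting S l t).Nonempty := ⟨i, by rw [waiting, mem_filter]; exact ⟨hi, hc⟩⟩
      have hmem := amin_waiting_mem_cset ha hw
      have h1 : r (amin (waiting S l t) l) ≤ step S l r t := r_le_step_of_mem_cset hmem
      have h2 : l (amin (waiting S l t) l) ≤ r (amin (waiting S l t) l) :=
        hlr _ (cset_subset hmem)
      have h3 : t < l (amin (waiting S l t) l) := by
        have := amin_mem l hw
        rw [waiting, mem_filter] at this
        exact this.2
      linarith
    · exact absurd ⟨i, by rw [active, mem_filter]; exact ⟨hi, hc⟩⟩ ha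

lemma r_le_step {t : ℝ} {i : ι} (hi : i ∈ S) (hl : l i ≤ t) : r i ≤ step S l r t := by
  by_cases hr : r i ≤ t
  · exact hr.trans (le_step hlr)
  · push_neg at hr
    have ha : (active S l r t).Nonempty := ⟨i, by rw [active, mem_filter]; exact ⟨hi, hl, hr⟩⟩
    exact r_le_step_of_mem_cset (mem_cset_of_started ha hi hl)

lemma hub_span {t q : ℝ} (hq1 : t < q) (hq2 : q ≤ step S l r t)
    (hcov : (∃ i ∈ S, l i ≤ q ∧ q ≤ r i) ∨ (∃ i ∈ S, l i = q)) :
    hub S l r t ∈ S ∧ l (hub S l r t) ≤ q ∧ q ≤ r (hub S l r t) ∧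
      r (hub S l r t) = step S l r t := by
  by_cases ha : (active S l r t).Nonempty
  · have hne : (cset S l r t).Nonempty := by
      obtain ⟨i0, hi0⟩ := ha
      exact ⟨i0, by rw [cset_eq_of_active ⟨i0, hi0⟩]; exact active_subset_started hi0⟩
    have hhub := hub_mem_cset hne
    rw [cset_eq_of_active ha, started, mem_filter] at hhub
    refine ⟨hhub.1, by linarith [hhub.2], ?_, (step_eq hne).symm⟩
    rw [← step_eq hne]; exact hq2
  · -- get a waiting witness from the coverage assumption
    have hwit : ∃ i ∈ S, t < l i ∧ l i ≤ q := by
      rcases hcov with ⟨i, hiS, h1, h2⟩ | ⟨i, hiS, h1⟩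
      · by_cases hli : l i ≤ t
        · exact absurd ⟨i, by rw [active, mem_filter]; exact ⟨hiS, hli, by linarith⟩⟩ ha
        · push_neg at hli; exact ⟨i, hiS, hli, h1⟩
      · exact ⟨i, hiS, by rw [h1]; exact hq1, le_of_eq h1⟩
    obtain ⟨iw, hiwS, hiw1, hiw2⟩ := hwit
    have hw : (waiting S l t).Nonempty := ⟨iw, by rw [waiting, mem_filter]; exact ⟨hiwS, hiw1⟩⟩
    have hne : (cset S l r t).Nonempty := ⟨_, amin_waiting_mem_cset ha hw⟩
    have hhub := hub_mem_cset hne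
    have hcs : cset S l r t = started S l (l (amin (waiting S l t) l)) := by
      rw [cset, if_neg ha, dif_pos hw]
    rw [hcs, started, mem_filter] at hhub
    have hmq : l (amin (waiting S l t) l) ≤ q := by
      have := amin_le l hw (i := iw) (by rw [waiting, mem_filter]; exact ⟨hiwS, hiw1⟩)
      linarith
    refine ⟨hhub.1, by linarith [hhub.2], ?_, (step_eq hne).symm⟩
    rw [← step_eq hne]; exact hq2

omit hlr in
lemma hub_left_of_active {t : ℝ} (ha : (active S l r t).Nonempty) :
    hub S l r t ∈ S ∧ l (hub S l r t) ≤ t := by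
  have hne : (cset S l r t).Nonempty := by
    obtain ⟨i0, hi0⟩ := ha
    exact ⟨i0, by rw [cset_eq_of_active ⟨i0, hi0⟩]; exact active_subset_started hi0⟩
  have hhub := hub_mem_cset hne
  rw [cset_eq_of_active ha, started, mem_filter] at hhub
  exact ⟨hhub.1, hhub.2⟩

lemma x_le_succ (j : ℕ) : x S l r j ≤ x S l r (j + 1) := le_step hlr

lemma x_mono : Monotone (x S l r) := monotone_nat_of_le_succ (x_le_succ hlr)

omit hlr in
lemma x_succ (j : ℕ) : x S l r (j + 1) = step S l r (x S l r j) := rfl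

omit hlr in
lemma x_pred {k : ℕ} (hk : 1 ≤ k) : x S l r k = step S l r (x S l r (k - 1)) := by
  cases k with
  | zero => omega
  | succ m => rfl

lemma phi_strict {t : ℝ} (h : ∃ i ∈ S, t < l i) : phi S l r (step S l r t) < phi S l r t := by
  obtain ⟨i0, hi0S, hi0⟩ := h
  have hts : t < step S l r t := lt_step hlr hi0S (Or.inl hi0)
  have hsubr : (S.filter fun i => step S l r t < r i) ⊆ S.filter fun i => t < r i := by
    intro i hi; rw [mem_filter] at *; exact ⟨hi.1, by linarith [hi.2]⟩
  have hsubl : (S.filter fun i => step S l r t < l i) ⊆ S.filter fun i => t < l i := by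
    intro i hi; rw [mem_filter] at *; exact ⟨hi.1, by linarith [hi.2]⟩
  by_cases ha : (active S l r t).Nonempty
  · obtain ⟨ia, hia⟩ := ha
    have hiamem := hia
    rw [active, mem_filter] at hiamem
    obtain ⟨hiaS, hla, hra⟩ := hiamem
    have h1 : r ia ≤ step S l r t := r_le_step hlr hiaS hla
    have hstrict : (S.filter fun i => step S l r t < r i).card <
        (S.filter fun i => t < r i).card := by
      apply Finset.card_lt_card
      refine ⟨hsubr, fun hsup => ?_⟩
      have := hsup (mem_filter.mpr ⟨hiaS, hra⟩)
      rw [mem_filter] at this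
      linarith [this.2]
    have hle2 : (S.filter fun i => step S l r t < l i).card ≤
        (S.filter fun i => t < l i).card := Finset.card_le_card hsubl
    unfold phi; omega
  · have hw : (waiting S l t).Nonempty := ⟨i0, by rw [waiting, mem_filter]; exact ⟨hi0S, hi0⟩⟩
    set iw := amin (waiting S l t) l with hiw_def
    have hiwmem : iw ∈ S ∧ t < l iw := mem_filter.mp (amin_mem l hw)
    have hmem := amin_waiting_mem_cset ha hw
    have h1 : r iw ≤ step S l r t := r_le_step_of_mem_cset hmem
    have h2 : l iw ≤ r iw := hlr _ hiwmem.1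
    have hstrict : (S.filter fun i => step S l r t < l i).card <
        (S.filter fun i => t < l i).card := by
      apply Finset.card_lt_card
      refine ⟨hsubl, fun hsup => ?_⟩
      have h5 : iw ∈ S.filter fun i => step S l r t < l i :=
        hsup (mem_filter.mpr ⟨hiwmem.1, hiwmem.2⟩)
      have := (mem_filter.mp h5).2
      linarith
    have hle2 : (S.filter fun i => step S l r t < r i).card ≤
        (S.filter fun i => t < r i).card := Finset.card_le_card hsubr
    unfold phi; omega

lemma reach : ∀ (k j : ℕ), phi S l r (x S l r j) ≤ k → ∀ i ∈ S, l i ≤ x S l r (j + k) := by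
  intro k
  induction k with
  | zero =>
    intro j h i hi
    have hcard : (S.filter fun i => x S l r j < l i).card = 0 := by
      unfold phi at h; omega
    rw [Finset.card_eq_zero, Finset.filter_eq_empty_iff] at hcard
    have := hcard hi
    push_neg at this
    simpa using this
  | succ k ih =>
    intro j h i hi
    by_cases hex : ∃ i' ∈ S, x S l r j < l i'
    · have hdec := phi_strict hlr hex
      have : phi S l r (x S l r (j + 1)) ≤ k := by
        rw [x_succ]; omega
      have := ih (j + 1) this i hi
      have heq : j + 1 + k = j + (k + 1) := by omega
      rwa [heq] at this
    · push_neg at hex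
      exact (hex i hi).trans (x_mono hlr (by omega : j ≤ j + (k + 1)))

lemma exists_le_x {i : ι} (hi : i ∈ S) : ∃ j, l i ≤ x S l r j :=
  ⟨0 + phi S l r (x S l r 0), reach hlr _ 0 le_rfl i hi⟩

omit hlr in
lemma le_x_g {p : ℝ} (h : ∃ j, p ≤ x S l r j) : p ≤ x S l r (g S l r p) := by
  rw [g, dif_pos h]; exact Nat.find_spec h

omit hlr in
lemma x_lt_of_lt_g {p : ℝ} (h : ∃ j, p ≤ x S l r j) {k : ℕ} (hk : k < g S l r p) :
    x S l r k < p := by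
  rw [g, dif_pos h] at hk
  have := Nat.find_min h hk
  linarith [not_le.mp this]

omit hlr in
lemma g_le_of_le {p : ℝ} {k : ℕ} (hpx : p ≤ x S l r k) : g S l r p ≤ k := by
  rw [g, dif_pos ⟨k, hpx⟩]; exact Nat.find_min' _ hpx

omit hlr in
lemma g_mono {p q : ℝ} (hpq : p ≤ q) (hq : ∃ j, q ≤ x S l r j) : g S l r p ≤ g S l r q :=
  g_le_of_le (hpq.trans (le_x_g hq))

omit hlr in
lemma g_pos {p : ℝ} (h : ∃ j, p ≤ x S l r j) (h0 : x S l r 0 < p) : 1 ≤ g S l r p := by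
  by_contra hc
  push_neg at hc
  interval_cases hg : g S l r p
  · have := le_x_g h
    rw [hg] at this
    linarith

omit hlr in
lemma g_x_eq {j : ℕ} (hlt : ∀ k < j, x S l r k < x S l r j) : g S l r (x S l r j) = j := by
  have hle : g S l r (x S l r j) ≤ j := g_le_of_le le_rfl
  rcases lt_or_eq_of_le hle with hlt' | heq
  · have h1 := le_x_g (S := S) (l := l) (r := r) (p := x S l r j) ⟨j, le_rfl⟩
    have h2 := hlt _ hlt'
    linarith
  · exact heq

end HopChain
open SimpleGraph Sum

namespace HopApp

open HopChain

variable (n : ℕ) [Nonempty (Fin n)] (l r a yy : Fin n → ℝ)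

/-- Abstract intersection relation. -/
def P : (Fin n ⊕ Fin n) → (Fin n ⊕ Fin n) → Prop
  | inl i, inl j => yy i = yy j ∧ l j ≤ r i ∧ l i ≤ r j
  | inl i, inr v => l i ≤ a v ∧ a v ≤ r i
  | inr v, inl i => l i ≤ a v ∧ a v ≤ r i
  | inr v, inr w => a v = a w

def SY (Y : ℝ) : Finset (Fin n) := univ.filter fun i => yy i = Y

def Lns (i : Fin n) : Finset (Fin n) := univ.filter fun v => l i ≤ a v ∧ a v ≤ r i

def vR (i : Fin n) : Fin n := amax (Lns n l r a i) a
def vL (i : Fin n) : Fin n := amin (Lns n l r a i) a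
def rep (v : Fin n) : Fin n := amin (univ.filter fun w => a w = a v) id

def f1 (i : Fin n) : Sym2 (Fin n ⊕ Fin n) :=
  s(inl i, inl (C (SY n yy (yy i)) l r (g (SY n yy (yy i)) l r (l i))))
def f2 (i : Fin n) : Sym2 (Fin n ⊕ Fin n) :=
  s(inl (C (SY n yy (yy i)) l r (g (SY n yy (yy i)) l r (r i) - 1)), inl i)
def f3 (v : Fin n) : Sym2 (Fin n ⊕ Fin n) :=
  s(inr v, inl (C univ l r (g univ l r (a v))))
def f4 (i : Fin n) : Sym2 (Fin n ⊕ Fin n) := s(inl i, inr (vR n l r a i))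
def f5 (i : Fin n) : Sym2 (Fin n ⊕ Fin n) := s(inl i, inr (vL n l r a i))
def f6 (v : Fin n) : Sym2 (Fin n ⊕ Fin n) := s(inr v, inr (rep n a v))

def Eset : Set (Sym2 (Fin n ⊕ Fin n)) :=
  Set.range (f1 n l r yy) ∪ Set.range (f2 n l r yy) ∪ Set.range (f3 n l r a) ∪
    Set.range (f4 n l r a) ∪ Set.range (f5 n l r a) ∪ Set.range (f6 n a)

def Gr : SimpleGraph (Fin n ⊕ Fin n) := SimpleGraph.fromRel (P n l r a yy)

def Hs : SimpleGraph (Fin n ⊕ Fin n) := Gr n l r a yy ⊓ SimpleGraph.fromEdgeSet (Eset n l r a yy)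

variable {n l r a yy}

lemma Psymm {u v : Fin n ⊕ Fin n} (h : P n l r a yy u v) : P n l r a yy v u := by
  cases u <;> cases v <;> simp only [P] at h ⊢ <;> tauto

lemma mkAdj {u v : Fin n ⊕ Fin n} (hne : u ≠ v) (hp : P n l r a yy u v)
    (hmem : s(u, v) ∈ Eset n l r a yy) : (Hs n l r a yy).Adj u v := by
  rw [Hs, SimpleGraph.inf_adj, SimpleGraph.fromEdgeSet_adj, Gr, SimpleGraph.fromRel_adj]
  exact ⟨⟨hne, Or.inl hp⟩, hmem, hne⟩

lemma walk1 {V : Type*} {G : SimpleGraph V} {u v : V} (h : G.Adj u v) :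
    ∃ p : G.Walk u v, p.length ≤ 3 := ⟨Walk.cons h Walk.nil, by simp⟩

lemma walk2 {V : Type*} {G : SimpleGraph V} {u w v : V} (h1 : G.Adj u w) (h2 : G.Adj w v) :
    ∃ p : G.Walk u v, p.length ≤ 3 := ⟨Walk.cons h1 (Walk.cons h2 Walk.nil), by simp⟩

lemma walk3 {V : Type*} {G : SimpleGraph V} {u w w' v : V} (h1 : G.Adj u w) (h2 : G.Adj w w')
    (h3 : G.Adj w' v) : ∃ p : G.Walk u v, p.length ≤ 3 :=
  ⟨Walk.cons h1 (Walk.cons h2 (Walk.cons h3 Walk.nil)), by simp⟩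

lemma ncard_range_le {β : Type*} (f : Fin n → β) : (Set.range f).ncard ≤ n := by
  rw [← Set.image_univ]
  refine (Set.ncard_image_le Set.finite_univ).trans ?_
  simp [Set.ncard_univ]

lemma count : (Hs n l r a yy).edgeSet.ncard ≤ 6 * n := by
  have h1 : (Hs n l r a yy).edgeSet ⊆ Eset n l r a yy := by
    refine (SimpleGraph.edgeSet_mono (inf_le_right)).trans ?_
    rw [SimpleGraph.edgeSet_fromEdgeSet]
    exact Set.diff_subset
  have hfin : (Eset n l r a yy).Finite := by
    unfold Eset
    exact (((((Set.finite_range _).union (Set.finite_range _)).union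
      (Set.finite_range _)).union (Set.finite_range _)).union
      (Set.finite_range _)).union (Set.finite_range _)
  refine (Set.ncard_le_ncard h1 hfin).trans ?_
  unfold Eset
  have u1 := Set.ncard_union_le (Set.range (f1 n l r yy) ∪ Set.range (f2 n l r yy) ∪
    Set.range (f3 n l r a) ∪ Set.range (f4 n l r a) ∪ Set.range (f5 n l r a))
    (Set.range (f6 n a))
  have u2 := Set.ncard_union_le (Set.range (f1 n l r yy) ∪ Set.range (f2 n l r yy) ∪
    Set.range (f3 n l r a) ∪ Set.range (f4 n l r a)) (Set.range (f5 n l r a))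
  have u3 := Set.ncard_union_le (Set.range (f1 n l r yy) ∪ Set.range (f2 n l r yy) ∪
    Set.range (f3 n l r a)) (Set.range (f4 n l r a))
  have u4 := Set.ncard_union_le (Set.range (f1 n l r yy) ∪ Set.range (f2 n l r yy))
    (Set.range (f3 n l r a))
  have u5 := Set.ncard_union_le (Set.range (f1 n l r yy)) (Set.range (f2 n l r yy))
  have r1 := ncard_range_le (f1 n l r yy)
  have r2 := ncard_range_le (f2 n l r yy)
  have r3 := ncard_range_le (f3 n l r a)
  have r4 := ncard_range_le (f4 n l r a)
  have r5 := ncard_range_le (f5 n l r a)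
  have r6 := ncard_range_le (f6 n a)
  omega

end HopApp
namespace HopApp

open HopChain SimpleGraph Sum Finset

variable {n : ℕ} [Nonempty (Fin n)] {l r a yy : Fin n → ℝ}

lemma f1_mem (i : Fin n) :
    s(inl i, inl (C (SY n yy (yy i)) l r (g (SY n yy (yy i)) l r (l i)))) ∈ Eset n l r a yy :=
  Set.mem_union_left _ <| Set.mem_union_left _ <| Set.mem_union_left _ <|
    Set.mem_union_left _ <| Set.mem_union_left _ ⟨i, rfl⟩

lemma f2_mem (i : Fin n) :
    s(inl (C (SY n yy (yy i)) l r (g (SY n yy (yy i)) l r (r i) - 1)), inl i) ∈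
      Eset n l r a yy :=
  Set.mem_union_left _ <| Set.mem_union_left _ <| Set.mem_union_left _ <|
    Set.mem_union_left _ <| Set.mem_union_right _ ⟨i, rfl⟩

lemma f3_mem (v : Fin n) :
    s(inr v, inl (C univ l r (g univ l r (a v)))) ∈ Eset n l r a yy :=
  Set.mem_union_left _ <| Set.mem_union_left _ <| Set.mem_union_left _ <|
    Set.mem_union_right _ ⟨v, rfl⟩

lemma f4_mem (i : Fin n) : s(inl i, inr (vR n l r a i)) ∈ Eset n l r a yy :=
  Set.mem_union_left _ <| Set.mem_union_left _ <| Set.mem_union_right _ ⟨i, rfl⟩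

lemma f5_mem (i : Fin n) : s(inl i, inr (vL n l r a i)) ∈ Eset n l r a yy :=
  Set.mem_union_left _ <| Set.mem_union_right _ ⟨i, rfl⟩

lemma f6_mem (v : Fin n) : s(inr v, inr (rep n a v)) ∈ Eset n l r a yy :=
  Set.mem_union_right _ ⟨v, rfl⟩

lemma rep_a (v : Fin n) : a (rep n a v) = a v := by
  have h : ((univ : Finset (Fin n)).filter fun w => a w = a v).Nonempty :=
    ⟨v, mem_filter.mpr ⟨mem_univ v, rfl⟩⟩
  exact (mem_filter.mp (amin_mem id h)).2

lemma rep_congr {v w : Fin n} (hvw : a v = a w) : rep n a v = rep n a w := by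
  unfold rep; rw [hvw]

lemma route_line_line (v w : Fin n) (hne : v ≠ w) (hvw : a v = a w) :
    ∃ p : (Hs n l r a yy).Walk (inr v) (inr w), p.length ≤ 3 := by
  have hrepv : a (rep n a v) = a v := rep_a v
  have hrw : rep n a w = rep n a v := (rep_congr hvw).symm
  by_cases h1 : rep n a v = v
  · refine walk1 (mkAdj (by simp [hne]) hvw ?_)
    rw [Sym2.eq_swap]
    have := f6_mem (l := l) (r := r) (a := a) (yy := yy) w
    rwa [hrw, h1] at this
  · by_cases h2 : rep n a v = w
    · refine walk1 (mkAdj (by simp [hne]) hvw ?_)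
      have := f6_mem (l := l) (r := r) (a := a) (yy := yy) v
      rwa [h2] at this
    · have e1 : (Hs n l r a yy).Adj (inr v) (inr (rep n a v)) :=
        mkAdj (by simp [Ne.symm h1]) hrepv.symm (f6_mem v)
      have e2 : (Hs n l r a yy).Adj (inr (rep n a v)) (inr w) := by
        refine mkAdj (by simp [h2]) (hrepv.trans hvw) ?_
        rw [Sym2.eq_swap]
        have := f6_mem (l := l) (r := r) (a := a) (yy := yy) w
        rwa [hrw] at this
      exact walk2 e1 e2

lemma route_seg_line (hle : ∀ i, l i ≤ r i) (i v : Fin n) (hp1 : l i ≤ a v) (hp2 : a v ≤ r i) :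
    ∃ p : (Hs n l r a yy).Walk (inl i) (inr v), p.length ≤ 3 := by
  have hlr : ∀ i' ∈ (univ : Finset (Fin n)), l i' ≤ r i' := fun i' _ => hle i'
  have hexl : ∃ j, l i ≤ x univ l r j := exists_le_x hlr (mem_univ i)
  have hria : r i ≤ x univ l r (g univ l r (l i) + 1) := by
    have := r_le_step hlr (mem_univ i) (le_x_g hexl)
    rwa [← x_succ] at this
  have hexv : ∃ j, a v ≤ x univ l r j := ⟨_, hp2.trans hria⟩
  have hk1 : 1 ≤ g univ l r (a v) := by
    refine g_pos hexv ?_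
    exact lt_of_lt_of_le (lt_x0 (mem_univ i)) hp1
  have htq : x univ l r (g univ l r (a v) - 1) < a v := x_lt_of_lt_g hexv (by omega)
  have hxk : a v ≤ x univ l r (g univ l r (a v)) := le_x_g hexv
  have hxkstep : x univ l r (g univ l r (a v)) = step univ l r (x univ l r (g univ l r (a v) - 1)) :=
    x_pred hk1
  have hspan := hub_span hlr htq (hxkstep ▸ hxk) (Or.inl ⟨i, mem_univ i, hp1, hp2⟩)
  have adjvC : (Hs n l r a yy).Adj (inr v) (inl (C univ l r (g univ l r (a v)))) :=
    mkAdj (by simp) ⟨hspan.2.1, hspan.2.2.1⟩ (f3_mem v)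
  by_cases hiC : i = C univ l r (g univ l r (a v))
  · rw [hiC]
    exact walk1 adjvC.symm
  · have hLv : v ∈ Lns n l r a i := mem_filter.mpr ⟨mem_univ v, hp1, hp2⟩
    have hLne : (Lns n l r a i).Nonempty := ⟨v, hLv⟩
    by_cases hsplit : l i ≤ x univ l r (g univ l r (a v) - 1)
    · -- use the rightmost line in segment i
      have hwmem : vR n l r a i ∈ Lns n l r a i := amax_mem a hLne
      have hwp : l i ≤ a (vR n l r a i) ∧ a (vR n l r a i) ≤ r i := (mem_filter.mp hwmem).2
      have hav_le : a v ≤ a (vR n l r a i) := le_amax a hLne hLv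
      have hexw : ∃ j, a (vR n l r a i) ≤ x univ l r j := ⟨_, hwp.2.trans hria⟩
      have hgw : g univ l r (a (vR n l r a i)) = g univ l r (a v) := by
        refine le_antisymm (g_le_of_le ?_) (g_mono hav_le hexw)
        refine hwp.2.trans ?_
        rw [hxkstep]
        exact r_le_step hlr (mem_univ i) hsplit
      have hta : x univ l r (g univ l r (a v) - 1) < a (vR n l r a i) :=
        lt_of_lt_of_le htq hav_le
      have hwx : a (vR n l r a i) ≤ x univ l r (g univ l r (a v)) := by
        rw [← hgw]; exact le_x_g hexw
      have hspanw := hub_span hlr hta (hxkstep ▸ hwx)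
        (Or.inl ⟨i, mem_univ i, hwp.1, hwp.2⟩)
      have e1 : (Hs n l r a yy).Adj (inl i) (inr (vR n l r a i)) :=
        mkAdj (by simp) hwp (f4_mem i)
      have e2 : (Hs n l r a yy).Adj (inr (vR n l r a i))
          (inl (C univ l r (g univ l r (a v)))) := by
        refine mkAdj (by simp) ⟨hspanw.2.1, hspanw.2.2.1⟩ ?_
        have := f3_mem (l := l) (r := r) (a := a) (yy := yy) (vR n l r a i)
        rwa [hgw] at this
      by_cases hwv : vR n l r a i = v
      · rw [hwv] at e1
        exact walk1 e1
      · exact walk3 e1 e2 adjvC.symm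
    · push_neg at hsplit
      have hwmem : vL n l r a i ∈ Lns n l r a i := amin_mem a hLne
      have hwp : l i ≤ a (vL n l r a i) ∧ a (vL n l r a i) ≤ r i := (mem_filter.mp hwmem).2
      have hav_le : a (vL n l r a i) ≤ a v := amin_le a hLne hLv
      have hexw : ∃ j, a (vL n l r a i) ≤ x univ l r j := ⟨_, hwp.2.trans hria⟩
      have hgw : g univ l r (a (vL n l r a i)) = g univ l r (a v) := by
        refine le_antisymm (g_mono hav_le hexv) ?_
        by_contra hc
        push_neg at hc
        have h1 : x univ l r (g univ l r (a (vL n l r a i))) ≤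
            x univ l r (g univ l r (a v) - 1) := x_mono hlr (by omega)
        have h2 := le_x_g hexw
        linarith [lt_of_lt_of_le hsplit hwp.1]
      have hta : x univ l r (g univ l r (a v) - 1) < a (vL n l r a i) :=
        lt_of_lt_of_le hsplit hwp.1
      have hwx : a (vL n l r a i) ≤ x univ l r (g univ l r (a v)) := by
        rw [← hgw]; exact le_x_g hexw
      have hspanw := hub_span hlr hta (hxkstep ▸ hwx)
        (Or.inl ⟨i, mem_univ i, hwp.1, hwp.2⟩)
      have e1 : (Hs n l r a yy).Adj (inl i) (inr (vL n l r a i)) :=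
        mkAdj (by simp) hwp (f5_mem i)
      have e2 : (Hs n l r a yy).Adj (inr (vL n l r a i))
          (inl (C univ l r (g univ l r (a v)))) := by
        refine mkAdj (by simp) ⟨hspanw.2.1, hspanw.2.2.1⟩ ?_
        have := f3_mem (l := l) (r := r) (a := a) (yy := yy) (vL n l r a i)
        rwa [hgw] at this
      by_cases hwv : vL n l r a i = v
      · rw [hwv] at e1
        exact walk1 e1
      · exact walk3 e1 e2 adjvC.symm

end HopApp
namespace HopApp

open HopChain SimpleGraph Sum Finset

variable {n : ℕ} [Nonempty (Fin n)] {l r a yy : Fin n → ℝ}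

lemma route_ss_core (hle : ∀ i, l i ≤ r i) (i j : Fin n) (Y : ℝ) (hYi : yy i = Y)
    (hYj : yy j = Y) (hne : i ≠ j) (h1 : l j ≤ r i) (h2 : l i ≤ r j)
    (hg : g (SY n yy Y) l r (l i) ≤ g (SY n yy Y) l r (l j)) :
    ∃ p : (Hs n l r a yy).Walk (inl i) (inl j), p.length ≤ 3 := by
  have hlr : ∀ i' ∈ SY n yy Y, l i' ≤ r i' := fun i' _ => hle i'
  have hiS : i ∈ SY n yy Y := mem_filter.mpr ⟨mem_univ i, hYi⟩
  have hjS : j ∈ SY n yy Y := mem_filter.mpr ⟨mem_univ j, hYj⟩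
  have hexi : ∃ jj, l i ≤ x (SY n yy Y) l r jj := exists_le_x hlr hiS
  have hexj : ∃ jj, l j ≤ x (SY n yy Y) l r jj := exists_le_x hlr hjS
  have hgi1 : 1 ≤ g (SY n yy Y) l r (l i) := g_pos hexi (lt_x0 hiS)
  have hgj1 : 1 ≤ g (SY n yy Y) l r (l j) := g_pos hexj (lt_x0 hjS)
  have hlix : l i ≤ x (SY n yy Y) l r (g (SY n yy Y) l r (l i)) := le_x_g hexi
  have hljx : l j ≤ x (SY n yy Y) l r (g (SY n yy Y) l r (l j)) := le_x_g hexj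
  have htlti : x (SY n yy Y) l r (g (SY n yy Y) l r (l i) - 1) < l i :=
    x_lt_of_lt_g hexi (by omega)
  have hstepi : x (SY n yy Y) l r (g (SY n yy Y) l r (l i)) =
      step (SY n yy Y) l r (x (SY n yy Y) l r (g (SY n yy Y) l r (l i) - 1)) := x_pred hgi1
  have hspanA := hub_span hlr htlti (hstepi ▸ hlix) (Or.inr ⟨i, hiS, rfl⟩)
  have hAdef : C (SY n yy Y) l r (g (SY n yy Y) l r (l i)) =
      hub (SY n yy Y) l r (x (SY n yy Y) l r (g (SY n yy Y) l r (l i) - 1)) := rfl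
  have hyA : yy (C (SY n yy Y) l r (g (SY n yy Y) l r (l i))) = Y := by
    rw [hAdef]; exact (mem_filter.mp hspanA.1).2
  have hrA : r (C (SY n yy Y) l r (g (SY n yy Y) l r (l i))) =
      x (SY n yy Y) l r (g (SY n yy Y) l r (l i)) := by
    rw [hAdef, hspanA.2.2.2, ← hstepi]
  have hlA : l (C (SY n yy Y) l r (g (SY n yy Y) l r (l i))) ≤ l i := by
    rw [hAdef]; exact hspanA.2.1
  have hrix : r i ≤ x (SY n yy Y) l r (g (SY n yy Y) l r (l i) + 1) := by
    have := r_le_step hlr hiS hlix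
    rwa [← x_succ] at this
  have hgj_le : g (SY n yy Y) l r (l j) ≤ g (SY n yy Y) l r (l i) + 1 :=
    g_le_of_le (h1.trans hrix)
  have hadj_iA : i ≠ C (SY n yy Y) l r (g (SY n yy Y) l r (l i)) →
      (Hs n l r a yy).Adj (inl i) (inl (C (SY n yy Y) l r (g (SY n yy Y) l r (l i)))) := by
    intro hni
    refine mkAdj (by simp [hni]) ⟨hYi.trans hyA.symm, hlA.trans (hle i), ?_⟩ ?_
    · rw [hAdef]; exact hspanA.2.2.1
    · have := f1_mem (l := l) (r := r) (a := a) (yy := yy) i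
      rwa [hYi] at this
  rcases (by omega : g (SY n yy Y) l r (l j) = g (SY n yy Y) l r (l i) ∨
      g (SY n yy Y) l r (l j) = g (SY n yy Y) l r (l i) + 1) with heq | hsucc
  · -- same block : i - A - j
    have hadj_jA : j ≠ C (SY n yy Y) l r (g (SY n yy Y) l r (l i)) →
        (Hs n l r a yy).Adj (inl j) (inl (C (SY n yy Y) l r (g (SY n yy Y) l r (l i)))) := by
      intro hnj
      refine mkAdj (by simp [hnj]) ⟨hYj.trans hyA.symm, hlA.trans (by linarith [hle i]), ?_⟩ ?_
      · rw [hrA, ← heq]; exact hljx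
      · have := f1_mem (l := l) (r := r) (a := a) (yy := yy) j
        rwa [hYj, heq] at this
    by_cases hiA : i = C (SY n yy Y) l r (g (SY n yy Y) l r (l i))
    · by_cases hjA : j = C (SY n yy Y) l r (g (SY n yy Y) l r (l i))
      · exact absurd (hiA.trans hjA.symm) hne
      · rw [hiA]
        exact walk1 (hadj_jA hjA).symm
    · by_cases hjA : j = C (SY n yy Y) l r (g (SY n yy Y) l r (l i))
      · rw [hjA]
        exact walk1 (hadj_iA hiA)
      · exact walk2 (hadj_iA hiA) (hadj_jA hjA).symm
  · -- consecutive blocks : i - A - B - j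
    have hidx : g (SY n yy Y) l r (l j) - 1 = g (SY n yy Y) l r (l i) := by omega
    have htltj : x (SY n yy Y) l r (g (SY n yy Y) l r (l j) - 1) < l j :=
      x_lt_of_lt_g hexj (by omega)
    rw [hidx] at htltj
    have hstepj : x (SY n yy Y) l r (g (SY n yy Y) l r (l j)) =
        step (SY n yy Y) l r (x (SY n yy Y) l r (g (SY n yy Y) l r (l j) - 1)) := x_pred hgj1
    rw [hidx] at hstepj
    have hBdef : C (SY n yy Y) l r (g (SY n yy Y) l r (l j)) =
        hub (SY n yy Y) l r (x (SY n yy Y) l r (g (SY n yy Y) l r (l i))) := by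
      rw [show C (SY n yy Y) l r (g (SY n yy Y) l r (l j)) =
        hub (SY n yy Y) l r (x (SY n yy Y) l r (g (SY n yy Y) l r (l j) - 1)) from rfl, hidx]
    have hact : (active (SY n yy Y) l r (x (SY n yy Y) l r (g (SY n yy Y) l r (l i)))).Nonempty :=
      ⟨i, mem_filter.mpr ⟨hiS, hlix, lt_of_lt_of_le htltj h1⟩⟩
    have hBleft := hub_left_of_active (l := l) (r := r) hact
    have hspanB := hub_span hlr htltj (by rw [← hstepj]; exact hljx) (Or.inr ⟨j, hjS, rfl⟩)
    have hyB : yy (C (SY n yy Y) l r (g (SY n yy Y) l r (l j))) = Y := by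
      rw [hBdef]; exact (mem_filter.mp hspanB.1).2
    have hrB : r (C (SY n yy Y) l r (g (SY n yy Y) l r (l j))) =
        x (SY n yy Y) l r (g (SY n yy Y) l r (l j)) := by
      rw [hBdef, hspanB.2.2.2, ← hstepj]
    have hxgigj : x (SY n yy Y) l r (g (SY n yy Y) l r (l i)) <
        x (SY n yy Y) l r (g (SY n yy Y) l r (l j)) := by
      rw [hstepj]
      exact lt_step hlr hjS (Or.inl htltj)
    have hABne : C (SY n yy Y) l r (g (SY n yy Y) l r (l i)) ≠
        C (SY n yy Y) l r (g (SY n yy Y) l r (l j)) := by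
      intro hh
      rw [hh, hrB] at hrA
      linarith
    have hgrB : g (SY n yy Y) l r (r (C (SY n yy Y) l r (g (SY n yy Y) l r (l j)))) =
        g (SY n yy Y) l r (l j) := by
      rw [hrB]
      exact g_x_eq fun k hk =>
        lt_of_le_of_lt (x_mono hlr (by omega : k ≤ g (SY n yy Y) l r (l i))) hxgigj
    have hadjAB : (Hs n l r a yy).Adj (inl (C (SY n yy Y) l r (g (SY n yy Y) l r (l i))))
        (inl (C (SY n yy Y) l r (g (SY n yy Y) l r (l j)))) := by
      refine mkAdj (by simp [hABne]) ⟨hyA.trans hyB.symm, ?_, ?_⟩ ?_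
      · rw [hrA, hBdef]; exact hBleft.2
      · rw [hrB]
        exact le_trans hlA (le_trans hlix (le_of_lt hxgigj))
      · have := f2_mem (l := l) (r := r) (a := a) (yy := yy)
          (C (SY n yy Y) l r (g (SY n yy Y) l r (l j)))
        rwa [hyB, hgrB, hidx] at this
    have hadj_jB : j ≠ C (SY n yy Y) l r (g (SY n yy Y) l r (l j)) →
        (Hs n l r a yy).Adj (inl j) (inl (C (SY n yy Y) l r (g (SY n yy Y) l r (l j)))) := by
      intro hnj
      refine mkAdj (by simp [hnj]) ⟨hYj.trans hyB.symm, ?_, ?_⟩ ?_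
      · rw [hBdef]
        exact le_trans hspanB.2.1 (hle j)
      · rw [hBdef]
        exact hspanB.2.2.1
      · have := f1_mem (l := l) (r := r) (a := a) (yy := yy) j
        rwa [hYj] at this
    by_cases hiA : i = C (SY n yy Y) l r (g (SY n yy Y) l r (l i))
    · by_cases hjB : j = C (SY n yy Y) l r (g (SY n yy Y) l r (l j))
      · rw [hiA, hjB]
        exact walk1 hadjAB
      · rw [hiA]
        exact walk2 hadjAB (hadj_jB hjB).symm
    · by_cases hjB : j = C (SY n yy Y) l r (g (SY n yy Y) l r (l j))
      · rw [hjB]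
        exact walk2 (hadj_iA hiA) hadjAB
      · exact walk3 (hadj_iA hiA) hadjAB (hadj_jB hjB).symm

lemma route_seg_seg (hle : ∀ i, l i ≤ r i) (i j : Fin n) (hne : i ≠ j) (hy : yy i = yy j)
    (h1 : l j ≤ r i) (h2 : l i ≤ r j) :
    ∃ p : (Hs n l r a yy).Walk (inl i) (inl j), p.length ≤ 3 := by
  rcases le_total (g (SY n yy (yy i)) l r (l i)) (g (SY n yy (yy i)) l r (l j)) with hgle | hgle
  · exact route_ss_core hle i j (yy i) rfl hy.symm hne h1 h2 hgle
  · obtain ⟨p, hp⟩ := route_ss_core hle j i (yy i) hy.symm rfl hne.symm h2 h1 hgle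
    exact ⟨p.reverse, by simpa using hp⟩

end HopApp
namespace HopApp

open HopChain SimpleGraph Sum Finset

theorem aux (n : ℕ) [Nonempty (Fin n)] (l r a yy : Fin n → ℝ) (hle : ∀ i, l i ≤ r i) :
    ∃ H : SimpleGraph (Fin n ⊕ Fin n),
      IsHopSpanner (Gr n l r a yy) H 3 ∧ H.edgeSet.ncard ≤ 6 * n := by
  refine ⟨Hs n l r a yy, ⟨inf_le_left, ?_⟩, count⟩
  intro u v hadj
  rw [Gr, SimpleGraph.fromRel_adj] at hadj
  obtain ⟨hne, hor⟩ := hadj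
  have hp : P n l r a yy u v := by
    rcases hor with h | h
    · exact h
    · exact Psymm h
  rcases u with i | w <;> rcases v with i' | w'
  · simp only [P] at hp
    exact route_seg_seg hle i i' (by simpa using hne) hp.1 hp.2.1 hp.2.2
  · simp only [P] at hp
    exact route_seg_line hle i w' hp.1 hp.2
  · simp only [P] at hp
    obtain ⟨p, hlen⟩ := route_seg_line (yy := yy) hle i' w hp.1 hp.2
    exact ⟨p.reverse, by simpa using hlen⟩
  · simp only [P] at hp
    exact route_line_line w w' (by simpa using hne) hp

lemma inter_ss {a1 b1 c1 a2 b2 c2 : ℝ} (h1 : a1 ≤ b1) (h2 : a2 ≤ b2) :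
    ((Set.Icc a1 b1 ×ˢ ({c1} : Set ℝ)) ∩ (Set.Icc a2 b2 ×ˢ ({c2} : Set ℝ))).Nonempty ↔
      (c1 = c2 ∧ a2 ≤ b1 ∧ a1 ≤ b2) := by
  constructor
  · rintro ⟨⟨px, py⟩, ⟨⟨hx1, hy1⟩, ⟨hx2, hy2⟩⟩⟩
    simp only [Set.mem_Icc, Set.mem_singleton_iff] at hx1 hy1 hx2 hy2
    exact ⟨hy1 ▸ hy2 ▸ rfl, by linarith [hx1.1, hx1.2, hx2.1, hx2.2],
      by linarith [hx1.1, hx1.2, hx2.1, hx2.2]⟩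
  · rintro ⟨hy, hab1, hab2⟩
    refine ⟨(max a1 a2, c1), ⟨?_, rfl⟩, ⟨?_, by simp [hy]⟩⟩
    · simp only [Set.mem_Icc]
      exact ⟨le_max_left _ _, max_le h1 hab1⟩
    · simp only [Set.mem_Icc]
      exact ⟨le_max_right _ _, max_le hab2 h2⟩

lemma inter_sl {a1 b1 c1 p : ℝ} :
    ((Set.Icc a1 b1 ×ˢ ({c1} : Set ℝ)) ∩ (({p} : Set ℝ) ×ˢ (Set.univ : Set ℝ))).Nonempty ↔
      (a1 ≤ p ∧ p ≤ b1) := by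
  constructor
  · rintro ⟨⟨px, py⟩, ⟨⟨hx1, _⟩, ⟨hx2, _⟩⟩⟩
    simp only [Set.mem_Icc] at hx1
    simp only [Set.mem_singleton_iff] at hx2
    exact ⟨hx2 ▸ hx1.1, hx2 ▸ hx1.2⟩
  · rintro ⟨hh1, hh2⟩
    exact ⟨(p, c1), ⟨by simp [Set.mem_Icc, hh1, hh2], rfl⟩, ⟨rfl, trivial⟩⟩

lemma inter_ll {p q : ℝ} :
    ((({p} : Set ℝ) ×ˢ (Set.univ : Set ℝ)) ∩ (({q} : Set ℝ) ×ˢ (Set.univ : Set ℝ))).Nonempty ↔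
      p = q := by
  constructor
  · rintro ⟨⟨px, py⟩, ⟨⟨hx1, _⟩, ⟨hx2, _⟩⟩⟩
    simp only [Set.mem_singleton_iff] at hx1 hx2
    exact hx1 ▸ hx2 ▸ rfl
  · rintro rfl
    exact ⟨(p, 0), ⟨rfl, trivial⟩, ⟨rfl, trivial⟩⟩

end HopApp

/-- The intersection graph of `n` horizontal segments and `n` vertical lines in the
plane admits a 3-hop spanner with `O(n)` edges. -/
theorem segments_lines_three_hop_spanner :
    ∃ c : ℕ, ∀ (n : ℕ) (seg line : Fin n → Set (ℝ × ℝ)),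
      (∀ i, ∃ x₁ x₂ y : ℝ, x₁ ≤ x₂ ∧ seg i = Set.Icc x₁ x₂ ×ˢ ({y} : Set ℝ)) →
      (∀ j, ∃ a : ℝ, line j = ({a} : Set ℝ) ×ˢ (Set.univ : Set ℝ)) →
      ∃ H : SimpleGraph (Fin n ⊕ Fin n),
        IsHopSpanner (SimpleGraph.fromRel fun u v : Fin n ⊕ Fin n =>
          (Sum.elim seg line u ∩ Sum.elim seg line v).Nonempty) H 3 ∧
        H.edgeSet.ncard ≤ c * n := by
  refine ⟨6, ?_⟩
  intro n seg line hseg hline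
  choose l r yy hle hseq using hseg
  choose a ha using hline
  by_cases hn0 : n = 0
  · subst hn0
    refine ⟨⊥, ⟨bot_le, fun u v h => ?_⟩, by simp⟩
    rcases u with i | i <;> exact i.elim0
  · haveI : Nonempty (Fin n) := ⟨⟨0, Nat.pos_of_ne_zero hn0⟩⟩
    have hG : (SimpleGraph.fromRel fun u v : Fin n ⊕ Fin n =>
        (Sum.elim seg line u ∩ Sum.elim seg line v).Nonempty) = HopApp.Gr n l r a yy := by
      unfold HopApp.Gr
      congr 1
      funext u v
      apply propext
      rcases u with i | w <;> rcases v with i' | w' <;>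
        simp only [Sum.elim_inl, Sum.elim_inr, HopApp.P]
      · rw [hseq i, hseq i', HopApp.inter_ss (hle i) (hle i')]
      · rw [hseq i, ha w', HopApp.inter_sl]
      · rw [ha w, hseq i']
        rw [Set.inter_comm, HopApp.inter_sl]
      · rw [ha w, ha w', HopApp.inter_ll]
    rw [hG]
    exact HopApp.aux n l r a yy hle
end
end
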